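/- arXiv:2101.03222 — 4 statements merged into one kernel-verified Lean document; each statement's English description precedes it below -/
import Mathlib

section
/- Let R be a commutative ring, x an element of R that is a non-zerodivisor on R, and let J be an ideal of R contained in an ideal I₁. Then for any ideal A of R, (x²·I₁² + x·I₁·J) ∩ J² = x·J², provided x is a non-zerodivisor modulo J² (i.e., J² : x = J²) and J ⊆ I₁. -/
namespace Ideal

variable {R : Type*} [CommRing R]

theorem span_singleton_mul_inf_eq_of_colon_le {x : R} {K M : Ideal R}
    (hcolon : K.colon (span {x}) ≤ K) (hKM : K ≤ M) :
    span {x} * M ⊓ K = span {x} * K := by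
  refine le_antisymm ?_ (le_inf (mul_mono_right hKM) mul_le_right)
  rintro _ ⟨hxm, hK⟩
  obtain ⟨m, -, rfl⟩ := mem_span_singleton_mul.mp hxm
  have hm : m ∈ K := hcolon <| mem_colon_span_singleton.mpr <| by rwa [mul_comm]
  exact mem_span_singleton_mul.mpr ⟨m, hm, rfl⟩

end Ideal

open Ideal in
theorem sparse_rees_intersection_lemma_general {R : Type*} [CommRing R] (x : R)
    (I₁ J : Ideal R) (hJI : J ≤ I₁)
    (hcolon : (J ^ 2).colon (Ideal.span {x}) = J ^ 2) :
    (Ideal.span {x ^ 2} * I₁ ^ 2 + Ideal.span {x} * I₁ * J) ⊓ J ^ 2 =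
      Ideal.span {x} * J ^ 2 := by
  have hfactor : span {x ^ 2} * I₁ ^ 2 + span {x} * I₁ * J =
      span {x} * (span {x} * I₁ ^ 2 + I₁ * J) := by
    rw [pow_two x, ← span_singleton_mul_span_singleton, mul_add, mul_assoc, mul_assoc]
  have hJ : J ^ 2 ≤ span {x} * I₁ ^ 2 + I₁ * J :=
    le_sup_of_le_right (pow_two J ▸ mul_mono_left hJI)
  rw [hfactor, span_singleton_mul_inf_eq_of_colon_le hcolon.le hJ]

/-- Let `R` be a commutative ring, `x ∈ R` a non-zerodivisor on `R`, and `I₁, J` ideals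
with `J ⊆ I₁`.  If moreover `x` is a non-zerodivisor modulo `J²`, i.e. `J² : (x) = J²`,
then `(x²I₁² + xI₁J) ∩ J² = xJ²`. -/
theorem sparse_rees_intersection_lemma {R : Type*} [CommRing R] (x : R)
    (hx : x ∈ nonZeroDivisors R) (I₁ J : Ideal R) (hJI : J ≤ I₁)
    (hcolon : (J ^ 2).colon (Ideal.span {x}) = J ^ 2) :
    (Ideal.span {x ^ 2} * I₁ ^ 2 + Ideal.span {x} * I₁ * J) ⊓ J ^ 2 =
      Ideal.span {x} * J ^ 2 :=
  sparse_rees_intersection_lemma_general x I₁ J hJI hcolon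
end

section
/- For integers n, r, s with 0 ≤ n−r−s ≤ r < n, the multiplicity formula e = C(n+s−2, n−r−1) − C(n+s−2, n−1) is a nonnegative integer, and one has the consistency identity: the h-vector entries h_k = C(r+s−1, k)·C(n−r−1, k) − C(s+1, k+1)·C(n−3, k−1) for 0 ≤ k ≤ r+s−1 (with C(a,b) = 0 when a < b) satisfy Σ_k h_k = C(n+s−2, n−r−1) − C(n+s−2, n−1). -/
/-!
Both halves of `h_k` sum separately by Vandermonde's identity:
`∑ C(r+s−1, k) C(n−r−1, k) = C(n+s−2, n−r−1)` and
`∑ C(s+1, k+1) C(n−3, k−1) = C(n+s−2, s−1) = C(n+s−2, n−1)`.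
For nonnegativity, `s − 1 ≤ n − r − 1 ≤ (n+s−2)/2`, and binomial coefficients increase up to
the middle.
-/

open Finset

theorem Nat.choose_le_choose_of_le_of_le_half {N a b : ℕ} (hab : a ≤ b) (hb : b ≤ N / 2) :
    N.choose a ≤ N.choose b := by
  induction b, hab using Nat.le_induction with
  | base => rfl
  | succ b _ ih => exact (ih (by omega)).trans (Nat.choose_le_succ_of_lt_half_left (by omega))

theorem Nat.sum_range_choose_add_mul_choose {a b c m : ℕ} (hc : c ≤ a) (hm : a - c < m) :
    ∑ j ∈ range m, a.choose (j + c) * b.choose j = (a + b).choose (a - c) := by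
  calc ∑ j ∈ range m, a.choose (j + c) * b.choose j
      = ∑ j ∈ range (a - c + 1), a.choose (j + c) * b.choose j := by
        refine (sum_subset (range_subset_range.2 hm) fun j _ hj => ?_).symm
        rw [Nat.choose_eq_zero_of_lt (by simp at hj; omega), zero_mul]
    _ = ∑ i ∈ range (a - c + 1), a.choose i * b.choose (a - c - i) := by
        rw [← sum_range_reflect]
        refine sum_congr rfl fun i hi => ?_
        simp only [mem_range] at hi
        rw [show a - c + 1 - 1 - i = a - c - i by omega,
          Nat.choose_symm_of_eq_add (show a = (a - c - i + c) + i by omega)]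
    _ = (a + b).choose (a - c) := by
        rw [Nat.add_choose_eq, Nat.sum_antidiagonal_eq_sum_range_succ_mk]

theorem choose_pred_le_choose_sub_sub_one {n r s : ℕ} (h1 : r + s ≤ n) (h2 : n ≤ 2 * r + s) :
    (n + s - 2).choose (n - 1) ≤ (n + s - 2).choose (n - r - 1) := by
  rcases Nat.lt_or_ge (n + s - 2) (n - 1) with hlt | hle
  · simp [Nat.choose_eq_zero_of_lt hlt]
  · rw [← Nat.choose_symm hle]
    exact Nat.choose_le_choose_of_le_of_le_half (by omega) (by omega)

theorem sum_range_choose_mul_choose_eq {n r s : ℕ} (h2 : n ≤ 2 * r + s) (h3 : r < n) :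
    ∑ k ∈ range (r + s), (r + s - 1).choose k * (n - r - 1).choose k
      = (n + s - 2).choose (n - r - 1) := by
  have hvand := Nat.sum_range_choose_add_mul_choose (a := n - r - 1) (b := r + s - 1) (c := 0)
    (m := r + s) (Nat.zero_le _) (by omega)
  simp only [add_zero, Nat.sub_zero] at hvand
  rw [show n + s - 2 = n - r - 1 + (r + s - 1) by omega, ← hvand]
  exact sum_congr rfl fun k _ => mul_comm _ _

theorem sum_range_choose_succ_mul_choose_pred {n r s : ℕ} (h1 : r + s ≤ n) (h3 : r < n)
    (hr : 1 ≤ r) :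
    ∑ k ∈ range (r + s), (s + 1).choose (k + 1) * (if k = 0 then 0 else (n - 3).choose (k - 1))
      = (n + s - 2).choose (n - 1) := by
  obtain ⟨m, hm⟩ : ∃ m, r + s = m + 1 := ⟨r + s - 1, by omega⟩
  rw [hm, sum_range_succ']
  simp only [add_tsub_cancel_right, add_eq_zero, one_ne_zero, and_false, if_false, if_true,
    mul_zero, add_zero]
  rcases Nat.eq_zero_or_pos s with rfl | hs
  · rw [Nat.choose_eq_zero_of_lt (by omega : n + 0 - 2 < n - 1)]
    exact sum_eq_zero fun k _ => by
      rw [Nat.choose_eq_zero_of_lt (by omega : 0 + 1 < k + 1 + 1), zero_mul]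
  rcases Nat.lt_or_ge n 3 with hn | hn
  -- `n − 3` truncates here; the hypotheses leave only `n = 2`, `r = s = 1`.
  · obtain rfl : n = 2 := by omega
    obtain rfl : s = 1 := by omega
    obtain rfl : m = 1 := by omega
    simp
  · rw [Nat.choose_symm_of_eq_add (show n + s - 2 = (n - 1) + (s - 1) by omega),
      show n + s - 2 = (s + 1) + (n - 3) by omega, show s - 1 = s + 1 - 2 by omega]
    exact Nat.sum_range_choose_add_mul_choose (c := 2) (by omega) (by omega)

/-- For integers `n, r, s` with `0 ≤ n − r − s ≤ r < n` and `r ≥ 1`, the multiplicity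
`e = C(n+s−2, n−r−1) − C(n+s−2, n−1)` is a nonnegative integer, and the h-vector entries
`h_k = C(r+s−1, k)·C(n−r−1, k) − C(s+1, k+1)·C(n−3, k−1)` for `0 ≤ k ≤ r+s−1`
(with `C(a, b) = 0` when `a < b` or `b < 0`, so the second product vanishes for `k = 0`)
sum to `e`. -/
theorem hvector_sums_to_multiplicity (n r s : ℕ)
    (h1 : r + s ≤ n) (h2 : n ≤ 2 * r + s) (h3 : r < n) (hr : 1 ≤ r) :
    0 ≤ (Nat.choose (n + s - 2) (n - r - 1) : ℤ) - Nat.choose (n + s - 2) (n - 1) ∧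
    ∑ k ∈ Finset.range (r + s),
        ((Nat.choose (r + s - 1) k : ℤ) * Nat.choose (n - r - 1) k -
          Nat.choose (s + 1) (k + 1) *
            (if k = 0 then 0 else (Nat.choose (n - 3) (k - 1) : ℤ))) =
      (Nat.choose (n + s - 2) (n - r - 1) : ℤ) - Nat.choose (n + s - 2) (n - 1) := by
  refine ⟨sub_nonneg.2 (mod_cast choose_pred_le_choose_sub_sub_one h1 h2), ?_⟩
  rw [sum_sub_distrib, ← sum_range_choose_mul_choose_eq h2 h3,
    ← sum_range_choose_succ_mul_choose_pred h1 h3 hr]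
  push_cast
  simp only [apply_ite]
end

section
/- For a sparse 2×n matrix X with I = I₂(X), the i-fold products of the 2×2 minors of X form a Gröbner basis of I^i with respect to any diagonal term order, for every i ≥ 1. -/
open MvPolynomial

/-- The leading exponent of a polynomial with respect to a monomial order. -/
noncomputable def mdeg {K σ : Type*} [Field K] (m : MonomialOrder σ) (f : MvPolynomial σ K) :
    σ →₀ ℕ :=
  m.toSyn.symm (f.support.sup fun d => m.toSyn d)

/-- The initial ideal of an ideal with respect to a monomial order. -/
noncomputable def initialIdeal {K σ : Type*} [Field K] (m : MonomialOrder σ)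
    (J : Ideal (MvPolynomial σ K)) : Ideal (MvPolynomial σ K) :=
  Ideal.span {g | ∃ f ∈ J, f ≠ 0 ∧ g = monomial (mdeg m f) (1 : K)}

/-- The `(u, i)` entry of the `2 × n` sparse matrix `X`. -/
noncomputable def sparseEntry (K : Type*) [Field K] (n r s : ℕ) (u : Fin 2) (i : ℕ) :
    MvPolynomial (Fin 2 × ℕ) K :=
  if (u = 0 ∧ 1 ≤ i ∧ i ≤ r + s) ∨ (u = 1 ∧ r + 1 ≤ i ∧ i ≤ n) then X (u, i) else 0

/-- The `2 × 2` minor of the sparse matrix on columns `i < j`. -/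
noncomputable def sparseMinor (K : Type*) [Field K] (n r s : ℕ) (i j : ℕ) :
    MvPolynomial (Fin 2 × ℕ) K :=
  sparseEntry K n r s 0 i * sparseEntry K n r s 1 j -
    sparseEntry K n r s 0 j * sparseEntry K n r s 1 i

namespace Aux

section P1


variable {K σ : Type*} [Field K] (m : MonomialOrder σ)

theorem le_mdeg {f : MvPolynomial σ K} {d : σ →₀ ℕ} (hd : d ∈ f.support) :
    m.toSyn d ≤ m.toSyn (mdeg m f) := by
  rw [mdeg, AddEquiv.apply_symm_apply]
  exact Finset.le_sup (f := fun d => m.toSyn d) hd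

theorem mdeg_mem_support {f : MvPolynomial σ K} (hf : f ≠ 0) : mdeg m f ∈ f.support := by
  have h : f.support.Nonempty := MvPolynomial.support_nonempty.mpr hf
  obtain ⟨d, hd, hds⟩ := Finset.exists_mem_eq_sup f.support h (fun d => m.toSyn d)
  rw [mdeg, hds]
  simpa using hd

theorem coeff_mdeg_ne_zero {f : MvPolynomial σ K} (hf : f ≠ 0) :
    f.coeff (mdeg m f) ≠ 0 := by
  have := mdeg_mem_support m hf
  rwa [MvPolynomial.mem_support_iff] at this

theorem coeff_eq_zero_of_mdeg_lt {f : MvPolynomial σ K} {d : σ →₀ ℕ}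
    (h : m.toSyn (mdeg m f) < m.toSyn d) : f.coeff d = 0 := by
  by_contra hc
  exact absurd (le_mdeg m (MvPolynomial.mem_support_iff.mpr hc)) (not_le.mpr h)

theorem toSyn_mdeg_le {f : MvPolynomial σ K} {D : m.syn}
    (h : ∀ d ∈ f.support, m.toSyn d ≤ D) : m.toSyn (mdeg m f) ≤ D := by
  rw [mdeg, AddEquiv.apply_symm_apply]
  exact Finset.sup_le h

theorem mdeg_le_iff {f : MvPolynomial σ K} {D : m.syn} :
    m.toSyn (mdeg m f) ≤ D ↔ ∀ d ∈ f.support, m.toSyn d ≤ D := by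
  constructor
  · intro h d hd
    exact le_trans (le_mdeg m hd) h
  · exact toSyn_mdeg_le m

theorem mdeg_monomial {d : σ →₀ ℕ} {c : K} (hc : c ≠ 0) :
    mdeg m (monomial d c) = d := by
  classical
  rw [mdeg, MvPolynomial.support_monomial, if_neg hc, Finset.sup_singleton,
    AddEquiv.symm_apply_apply]

/-- The coefficient of a product at the sum of the leading exponents. -/
theorem coeff_mul_mdeg (f g : MvPolynomial σ K) :
    (f * g).coeff (mdeg m f + mdeg m g) = f.coeff (mdeg m f) * g.coeff (mdeg m g) := by
  classical
  rw [MvPolynomial.coeff_mul]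
  rw [Finset.sum_eq_single (mdeg m f, mdeg m g)]
  · intro b hb hne
    rcases Finset.HasAntidiagonal.mem_antidiagonal.mp hb with h
    by_cases hb1 : b.1 ∈ f.support
    · by_cases hb2 : b.2 ∈ g.support
      · exfalso
        have h1 : m.toSyn b.1 ≤ m.toSyn (mdeg m f) := le_mdeg m hb1
        have h2 : m.toSyn b.2 ≤ m.toSyn (mdeg m g) := le_mdeg m hb2
        have hlt : m.toSyn b.1 < m.toSyn (mdeg m f) ∨ m.toSyn b.2 < m.toSyn (mdeg m g) := by
          rcases lt_or_eq_of_le h1 with h1' | h1'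
          · exact Or.inl h1'
          · rcases lt_or_eq_of_le h2 with h2' | h2'
            · exact Or.inr h2'
            · exfalso
              apply hne
              have e1 : b.1 = mdeg m f := m.toSyn.injective h1'
              have e2 : b.2 = mdeg m g := m.toSyn.injective h2'
              exact Prod.ext e1 e2
        have : m.toSyn b.1 + m.toSyn b.2 < m.toSyn (mdeg m f) + m.toSyn (mdeg m g) := by
          rcases hlt with h' | h'
          · exact add_lt_add_of_lt_of_le h' h2
          · exact add_lt_add_of_le_of_lt h1 h'
        rw [← map_add, ← map_add, h] at this
        exact lt_irrefl _ this
      · rw [MvPolynomial.notMem_support_iff.mp hb2, mul_zero]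
    · rw [MvPolynomial.notMem_support_iff.mp hb1, zero_mul]
  · intro h
    exfalso
    exact h (Finset.HasAntidiagonal.mem_antidiagonal.mpr rfl)

theorem mdeg_mul {f g : MvPolynomial σ K} (hf : f ≠ 0) (hg : g ≠ 0) :
    mdeg m (f * g) = mdeg m f + mdeg m g := by
  classical
  have hcoeff : (f * g).coeff (mdeg m f + mdeg m g) ≠ 0 := by
    rw [coeff_mul_mdeg]
    exact mul_ne_zero (coeff_mdeg_ne_zero m hf) (coeff_mdeg_ne_zero m hg)
  have h1 : m.toSyn (mdeg m f + mdeg m g) ≤ m.toSyn (mdeg m (f * g)) :=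
    le_mdeg m (MvPolynomial.mem_support_iff.mpr hcoeff)
  have h2 : m.toSyn (mdeg m (f * g)) ≤ m.toSyn (mdeg m f + mdeg m g) := by
    apply toSyn_mdeg_le
    intro d hd
    have := MvPolynomial.support_mul f g hd
    rw [Finset.mem_add] at this
    obtain ⟨u, hu, v, hv, hd'⟩ := this
    subst hd'
    rw [map_add, map_add]
    exact add_le_add (le_mdeg m hu) (le_mdeg m hv)
  exact m.toSyn.injective (le_antisymm h2 h1)

theorem support_sub_lead {f : MvPolynomial σ K} (hf : f ≠ 0) {d : σ →₀ ℕ}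
    (hd : d ∈ (f - monomial (mdeg m f) (f.coeff (mdeg m f))).support) :
    m.toSyn d < m.toSyn (mdeg m f) := by
  classical
  rw [MvPolynomial.mem_support_iff] at hd
  have hne : d ≠ mdeg m f := by
    intro h
    subst h
    rw [MvPolynomial.coeff_sub, MvPolynomial.coeff_monomial, if_pos rfl, sub_self] at hd
    exact hd rfl
  have hdf : d ∈ f.support := by
    rw [MvPolynomial.mem_support_iff]
    intro h
    rw [MvPolynomial.coeff_sub, h, MvPolynomial.coeff_monomial,
      if_neg (fun he : mdeg m f = d => hne he.symm), zero_sub, neg_zero] at hd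
    exact hd rfl
  exact lt_of_le_of_ne (le_mdeg m hdf) (fun h => hne (m.toSyn.injective h))

theorem mdeg_eq_of_coeff {f : MvPolynomial σ K} {E : σ →₀ ℕ}
    (h1 : f.coeff E ≠ 0) (h2 : ∀ d ∈ f.support, m.toSyn d ≤ m.toSyn E) :
    mdeg m f = E := by
  have ha : m.toSyn E ≤ m.toSyn (mdeg m f) := le_mdeg m (MvPolynomial.mem_support_iff.mpr h1)
  have hb : m.toSyn (mdeg m f) ≤ m.toSyn E := toSyn_mdeg_le m h2
  exact m.toSyn.injective (le_antisymm hb ha)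


end P1

section P2


/-- The diagonal exponent of the minor on columns `i < j`. -/
noncomputable def dg (i j : ℕ) : (Fin 2 × ℕ) →₀ ℕ :=
  Finsupp.single ((0 : Fin 2), i) 1 + Finsupp.single ((1 : Fin 2), j) 1

theorem dg_def (i j : ℕ) :
    dg i j = Finsupp.single ((0 : Fin 2), i) 1 + Finsupp.single ((1 : Fin 2), j) 1 := rfl

theorem dg_apply_fst (i j c : ℕ) :
    dg i j ((0 : Fin 2), c) = if i = c then 1 else 0 := by
  rw [dg_def, Finsupp.add_apply, Finsupp.single_apply, Finsupp.single_apply]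
  have hten : ((1 : Fin 2), j) ≠ ((0 : Fin 2), c) := by
    intro h
    have h1 : ((1 : Fin 2), j).1 = ((0 : Fin 2), c).1 := congrArg Prod.fst h
    have h2 : (1 : Fin 2) = 0 := h1
    exact absurd h2 (by decide)
  rw [if_neg hten, add_zero]
  by_cases h : i = c
  · subst h; rw [if_pos rfl, if_pos rfl]
  · rw [if_neg (by simpa using h), if_neg h]

theorem dg_apply_snd (i j c : ℕ) :
    dg i j ((1 : Fin 2), c) = if j = c then 1 else 0 := by
  rw [dg_def, Finsupp.add_apply, Finsupp.single_apply, Finsupp.single_apply]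
  have hten : ((0 : Fin 2), i) ≠ ((1 : Fin 2), c) := by
    intro h
    have h1 : ((0 : Fin 2), i).1 = ((1 : Fin 2), c).1 := congrArg Prod.fst h
    have h2 : (0 : Fin 2) = 1 := h1
    exact absurd h2 (by decide)
  rw [if_neg hten, zero_add]
  by_cases h : j = c
  · subst h; rw [if_pos rfl, if_pos rfl]
  · rw [if_neg (by simpa using h), if_neg h]

theorem dg_ne {i j : ℕ} (h : i ≠ j) : dg j i ≠ dg i j := by
  intro he
  have hv : dg j i ((0 : Fin 2), i) = dg i j ((0 : Fin 2), i) := by rw [he]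
  rw [dg_apply_fst, dg_apply_fst, if_neg (fun hh => h hh.symm), if_pos rfl] at hv
  exact absurd hv (by decide)

variable {K : Type*} [Field K] {n r s : ℕ}

theorem entry0_cases (i : ℕ) :
    sparseEntry K n r s 0 i = X ((0 : Fin 2), i) ∧ (1 ≤ i ∧ i ≤ r + s) ∨
      sparseEntry K n r s 0 i = 0 ∧ ¬(1 ≤ i ∧ i ≤ r + s) := by
  rw [sparseEntry]
  by_cases h : 1 ≤ i ∧ i ≤ r + s
  · left
    refine ⟨?_, h⟩
    rw [if_pos (Or.inl ⟨rfl, h⟩)]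
  · right
    refine ⟨?_, h⟩
    rw [if_neg]
    rintro (⟨-, hc⟩ | ⟨hc, -⟩)
    · exact h hc
    · exact absurd hc (by decide)

theorem entry1_cases (i : ℕ) :
    sparseEntry K n r s 1 i = X ((1 : Fin 2), i) ∧ (r + 1 ≤ i ∧ i ≤ n) ∨
      sparseEntry K n r s 1 i = 0 ∧ ¬(r + 1 ≤ i ∧ i ≤ n) := by
  rw [sparseEntry]
  by_cases h : r + 1 ≤ i ∧ i ≤ n
  · left
    refine ⟨?_, h⟩
    rw [if_pos (Or.inr ⟨rfl, h⟩)]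
  · right
    refine ⟨?_, h⟩
    rw [if_neg]
    rintro (⟨hc, -⟩ | ⟨-, hc⟩)
    · exact absurd hc (by decide)
    · exact h hc

theorem entry0_ne_iff {i : ℕ} :
    sparseEntry K n r s 0 i ≠ 0 ↔ (1 ≤ i ∧ i ≤ r + s) := by
  rcases entry0_cases (K := K) (n := n) (r := r) (s := s) i with ⟨he, hc⟩ | ⟨he, hc⟩
  · rw [he]; exact ⟨fun _ => hc, fun _ => X_ne_zero _⟩
  · rw [he]; exact ⟨fun h => absurd rfl h, fun h => absurd h hc⟩

theorem entry1_ne_iff {i : ℕ} :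
    sparseEntry K n r s 1 i ≠ 0 ↔ (r + 1 ≤ i ∧ i ≤ n) := by
  rcases entry1_cases (K := K) (n := n) (r := r) (s := s) i with ⟨he, hc⟩ | ⟨he, hc⟩
  · rw [he]; exact ⟨fun _ => hc, fun _ => X_ne_zero _⟩
  · rw [he]; exact ⟨fun h => absurd rfl h, fun h => absurd h hc⟩

theorem entry0_eq_X {i : ℕ} (h : sparseEntry K n r s 0 i ≠ 0) :
    sparseEntry K n r s 0 i = X ((0 : Fin 2), i) := by
  rcases entry0_cases (K := K) (n := n) (r := r) (s := s) i with ⟨he, -⟩ | ⟨he, -⟩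
  · exact he
  · exact absurd he h

theorem entry1_eq_X {i : ℕ} (h : sparseEntry K n r s 1 i ≠ 0) :
    sparseEntry K n r s 1 i = X ((1 : Fin 2), i) := by
  rcases entry1_cases (K := K) (n := n) (r := r) (s := s) i with ⟨he, -⟩ | ⟨he, -⟩
  · exact he
  · exact absurd he h

/-- The diagonal entries of a nonzero minor are nonzero (uses `r + s ≤ n`). -/
theorem diag_entries_ne_zero (h1 : r + s ≤ n) {i j : ℕ} (hij : i < j)
    (hne : sparseMinor K n r s i j ≠ 0) :
    sparseEntry K n r s 0 i ≠ 0 ∧ sparseEntry K n r s 1 j ≠ 0 := by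
  constructor
  · intro h0
    rw [sparseMinor, h0, zero_mul, zero_sub, neg_ne_zero] at hne
    have hj : sparseEntry K n r s 0 j ≠ 0 := left_ne_zero_of_mul hne
    have hi : sparseEntry K n r s 1 i ≠ 0 := right_ne_zero_of_mul hne
    rw [entry0_ne_iff] at hj
    rw [entry1_ne_iff] at hi
    exact absurd h0 (entry0_ne_iff.mpr ⟨le_trans (by omega) hi.1, le_trans (le_of_lt hij) hj.2⟩)
  · intro h1j
    rw [sparseMinor, h1j, mul_zero, zero_sub, neg_ne_zero] at hne
    have hj : sparseEntry K n r s 0 j ≠ 0 := left_ne_zero_of_mul hne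
    have hi : sparseEntry K n r s 1 i ≠ 0 := right_ne_zero_of_mul hne
    rw [entry0_ne_iff] at hj
    rw [entry1_ne_iff] at hi
    exact absurd h1j (entry1_ne_iff.mpr ⟨by omega, le_trans hj.2 h1⟩)

theorem coeff_minor_diag {i j : ℕ} (hij : i ≠ j)
    (h0 : sparseEntry K n r s 0 i ≠ 0) (h1j : sparseEntry K n r s 1 j ≠ 0) :
    (sparseMinor K n r s i j).coeff (dg i j) = 1 := by
  classical
  rw [sparseMinor, entry0_eq_X h0, entry1_eq_X h1j, X, X, monomial_mul, ← dg_def]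
  rw [MvPolynomial.coeff_sub, MvPolynomial.coeff_monomial, if_pos rfl, one_mul]
  have hanti : (sparseEntry K n r s 0 j * sparseEntry K n r s 1 i).coeff (dg i j) = 0 := by
    by_cases hj : sparseEntry K n r s 0 j = 0
    · rw [hj, zero_mul, MvPolynomial.coeff_zero]
    · by_cases hi : sparseEntry K n r s 1 i = 0
      · rw [hi, mul_zero, MvPolynomial.coeff_zero]
      · rw [entry0_eq_X hj, entry1_eq_X hi, X, X, monomial_mul, ← dg_def,
          MvPolynomial.coeff_monomial, if_neg (dg_ne hij)]
  rw [hanti, sub_zero]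

theorem minor_ne_zero {i j : ℕ} (hij : i ≠ j)
    (h0 : sparseEntry K n r s 0 i ≠ 0) (h1j : sparseEntry K n r s 1 j ≠ 0) :
    sparseMinor K n r s i j ≠ 0 := by
  intro h
  have := coeff_minor_diag (K := K) (n := n) (r := r) (s := s) hij h0 h1j
  rw [h, MvPolynomial.coeff_zero] at this
  exact one_ne_zero this.symm

theorem minor_decomp {i j : ℕ}
    (h0 : sparseEntry K n r s 0 i ≠ 0) (h1j : sparseEntry K n r s 1 j ≠ 0) :
    sparseMinor K n r s i j = monomial (dg i j) (1 : K) -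
      sparseEntry K n r s 0 j * sparseEntry K n r s 1 i := by
  rw [sparseMinor, entry0_eq_X h0, entry1_eq_X h1j, X, X, monomial_mul, one_mul, ← dg_def]

theorem coeff_minor_anti {i j : ℕ} (hij : i ≠ j)
    (h0 : sparseEntry K n r s 0 i ≠ 0) (h1j : sparseEntry K n r s 1 j ≠ 0)
    (h0j : sparseEntry K n r s 0 j ≠ 0) (h1i : sparseEntry K n r s 1 i ≠ 0) :
    (sparseMinor K n r s i j).coeff (dg j i) = -1 := by
  classical
  rw [minor_decomp h0 h1j, entry0_eq_X h0j, entry1_eq_X h1i, X, X, monomial_mul, one_mul,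
    ← dg_def]
  rw [MvPolynomial.coeff_sub, MvPolynomial.coeff_monomial, if_neg (fun h => dg_ne hij h.symm),
    MvPolynomial.coeff_monomial, if_pos rfl, zero_sub]

variable (m : MonomialOrder (Fin 2 × ℕ))

/-- With a diagonal order, the antidiagonal exponent is strictly below the diagonal one,
whenever the antidiagonal term actually occurs in a nonzero minor. -/
theorem anti_lt_diag
    (hdiag : ∀ i j : ℕ, 1 ≤ i → i < j → j ≤ n → sparseMinor K n r s i j ≠ 0 →
      mdeg m (sparseMinor K n r s i j) =
        Finsupp.single ((0 : Fin 2), i) 1 + Finsupp.single ((1 : Fin 2), j) 1)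
    {i j : ℕ} (hi : 1 ≤ i) (hij : i < j) (hj : j ≤ n)
    (hne : sparseMinor K n r s i j ≠ 0)
    (h0j : sparseEntry K n r s 0 j ≠ 0) (h1i : sparseEntry K n r s 1 i ≠ 0) :
    m.toSyn (dg j i) < m.toSyn (dg i j) := by
  have h0 : sparseEntry K n r s 0 i ≠ 0 ∧ sparseEntry K n r s 1 j ≠ 0 := by
    constructor
    · rw [entry0_ne_iff] at h0j ⊢
      rw [entry1_ne_iff] at h1i
      exact ⟨hi, le_trans (le_of_lt hij) h0j.2⟩
    · rw [entry0_ne_iff] at h0j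
      rw [entry1_ne_iff] at h1i ⊢
      exact ⟨by omega, hj⟩
  have hanti : (sparseMinor K n r s i j).coeff (dg j i) ≠ 0 := by
    rw [coeff_minor_anti (ne_of_lt hij) h0.1 h0.2 h0j h1i]
    exact neg_ne_zero.mpr one_ne_zero
  have hmem : dg j i ∈ (sparseMinor K n r s i j).support := MvPolynomial.mem_support_iff.mpr hanti
  have hle := le_mdeg m hmem
  rw [hdiag i j hi hij hj hne] at hle
  have : m.toSyn (dg j i) ≤ m.toSyn (dg i j) := hle
  rcases lt_or_eq_of_le this with h | h
  · exact h
  · exact absurd (m.toSyn.injective h) (dg_ne (ne_of_lt hij))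


end P2

section P3

variable {K : Type*} [Field K] {n r s : ℕ}

/-- Admissible pair: a sorted pair of column indices within range with nonzero minor. -/
def Adm (K : Type*) [Field K] (n r s : ℕ) (p : ℕ × ℕ) : Prop :=
  1 ≤ p.1 ∧ p.1 < p.2 ∧ p.2 ≤ n ∧ sparseMinor K n r s p.1 p.2 ≠ 0

/-- Product of the minors indexed by a list of pairs. -/
noncomputable def prodOf (K : Type*) [Field K] (n r s : ℕ) (ls : List (ℕ × ℕ)) :
    MvPolynomial (Fin 2 × ℕ) K :=
  (ls.map fun p => sparseMinor K n r s p.1 p.2).prod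

/-- Sum of the diagonal exponents of a list of pairs. -/
noncomputable def dsum (ls : List (ℕ × ℕ)) : (Fin 2 × ℕ) →₀ ℕ :=
  (ls.map fun p => dg p.1 p.2).sum

theorem prodOf_nil : prodOf K n r s [] = 1 := rfl

theorem dsum_nil : dsum ([] : List (ℕ × ℕ)) = 0 := rfl

theorem prodOf_cons (p : ℕ × ℕ) (ls : List (ℕ × ℕ)) :
    prodOf K n r s (p :: ls) = sparseMinor K n r s p.1 p.2 * prodOf K n r s ls := by
  rw [prodOf, List.map_cons, List.prod_cons, prodOf]

theorem dsum_cons (p : ℕ × ℕ) (ls : List (ℕ × ℕ)) :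
    dsum (p :: ls) = dg p.1 p.2 + dsum ls := by
  rw [dsum, List.map_cons, List.sum_cons, dsum]

theorem prodOf_perm {ls ls' : List (ℕ × ℕ)} (h : ls.Perm ls') :
    prodOf K n r s ls = prodOf K n r s ls' := by
  unfold prodOf
  have := (h.map fun p => sparseMinor K n r s p.1 p.2)
  exact this.prod_eq

theorem dsum_perm {ls ls' : List (ℕ × ℕ)} (h : ls.Perm ls') : dsum ls = dsum ls' := by
  unfold dsum
  exact List.Perm.sum_eq (h.map fun p => dg p.1 p.2)

theorem prodOf_ne_zero {ls : List (ℕ × ℕ)} (h : ∀ p ∈ ls, Adm K n r s p) :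
    prodOf K n r s ls ≠ 0 := by
  induction ls with
  | nil => rw [prodOf_nil]; exact one_ne_zero
  | cons p ls ih =>
    rw [prodOf_cons]
    exact mul_ne_zero (h p (List.mem_cons_self)).2.2.2
      (ih fun q hq => h q (List.mem_cons_of_mem p hq))

variable (m : MonomialOrder (Fin 2 × ℕ))

theorem mdeg_one : mdeg m (1 : MvPolynomial (Fin 2 × ℕ) K) = 0 := by
  have : (1 : MvPolynomial (Fin 2 × ℕ) K) = monomial 0 1 := by
    rw [monomial_zero']; rw [map_one]
  rw [this, mdeg_monomial m one_ne_zero]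

theorem mdeg_prodOf
    (hdiag : ∀ i j : ℕ, 1 ≤ i → i < j → j ≤ n → sparseMinor K n r s i j ≠ 0 →
      mdeg m (sparseMinor K n r s i j) =
        Finsupp.single ((0 : Fin 2), i) 1 + Finsupp.single ((1 : Fin 2), j) 1)
    {ls : List (ℕ × ℕ)} (h : ∀ p ∈ ls, Adm K n r s p) :
    mdeg m (prodOf K n r s ls) = dsum ls := by
  induction ls with
  | nil => rw [prodOf_nil, dsum_nil, mdeg_one]
  | cons p ls ih =>
    have hp := h p (List.mem_cons_self)
    have hrest : ∀ q ∈ ls, Adm K n r s q := fun q hq => h q (List.mem_cons_of_mem p hq)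
    rw [prodOf_cons, dsum_cons,
      mdeg_mul m hp.2.2.2 (prodOf_ne_zero hrest),
      hdiag p.1 p.2 hp.1 hp.2.1 hp.2.2.1 hp.2.2.2, ih hrest, dg_def]

theorem lc_prodOf (h1 : r + s ≤ n)
    (hdiag : ∀ i j : ℕ, 1 ≤ i → i < j → j ≤ n → sparseMinor K n r s i j ≠ 0 →
      mdeg m (sparseMinor K n r s i j) =
        Finsupp.single ((0 : Fin 2), i) 1 + Finsupp.single ((1 : Fin 2), j) 1)
    {ls : List (ℕ × ℕ)} (h : ∀ p ∈ ls, Adm K n r s p) :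
    (prodOf K n r s ls).coeff (dsum ls) = 1 := by
  induction ls with
  | nil =>
    rw [prodOf_nil, dsum_nil]
    simp
  | cons p ls ih =>
    have hp := h p (List.mem_cons_self)
    have hrest : ∀ q ∈ ls, Adm K n r s q := fun q hq => h q (List.mem_cons_of_mem p hq)
    have hd := diag_entries_ne_zero h1 hp.2.1 hp.2.2.2
    have hmdm := hdiag p.1 p.2 hp.1 hp.2.1 hp.2.2.1 hp.2.2.2
    have := coeff_mul_mdeg m (sparseMinor K n r s p.1 p.2) (prodOf K n r s ls)
    rw [hmdm, mdeg_prodOf m hdiag hrest, ← dg_def] at this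
    rw [prodOf_cons, dsum_cons, this, ih hrest, mul_one,
      coeff_minor_diag (ne_of_lt hp.2.1) hd.1 hd.2]

theorem dsum_apply_fst {ls : List (ℕ × ℕ)} (c : ℕ) :
    dsum ls ((0 : Fin 2), c) = (ls.map Prod.fst).count c := by
  induction ls with
  | nil => rw [dsum_nil]; rfl
  | cons p ls ih =>
    rw [dsum_cons, Finsupp.add_apply, dg_apply_fst, ih, List.map_cons, List.count_cons]
    by_cases h : p.1 = c
    · rw [if_pos h, if_pos (by exact beq_iff_eq.mpr h)]; omega
    · rw [if_neg h, if_neg (by simpa using h)]; omega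

theorem dsum_apply_snd {ls : List (ℕ × ℕ)} (c : ℕ) :
    dsum ls ((1 : Fin 2), c) = (ls.map Prod.snd).count c := by
  induction ls with
  | nil => rw [dsum_nil]; rfl
  | cons p ls ih =>
    rw [dsum_cons, Finsupp.add_apply, dg_apply_snd, ih, List.map_cons, List.count_cons]
    by_cases h : p.2 = c
    · rw [if_pos h, if_pos (by exact beq_iff_eq.mpr h)]; omega
    · rw [if_neg h, if_neg (by simpa using h)]; omega

theorem mdeg_neg (f : MvPolynomial (Fin 2 × ℕ) K) : mdeg m (-f) = mdeg m f := by
  rw [mdeg, mdeg, MvPolynomial.support_neg]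

theorem syn_add_lt_left (u : (Fin 2 × ℕ) →₀ ℕ) {v w : (Fin 2 × ℕ) →₀ ℕ}
    (h : m.toSyn v < m.toSyn w) : m.toSyn (u + v) < m.toSyn (u + w) := by
  rw [map_add, map_add]
  exact add_lt_add_of_le_of_lt le_rfl h

/-- Bound pattern: a monomial cofactor times a polynomial with small degree stays below `E`. -/
theorem bound_mono {h : MvPolynomial (Fin 2 × ℕ) K} (hh : h ≠ 0) {L E : (Fin 2 × ℕ) →₀ ℕ}
    (hLE : L ≤ E) (hlt : m.toSyn (mdeg m h) < m.toSyn L) :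
    m.toSyn (mdeg m (monomial (E - L) (1 : K) * h)) < m.toSyn E := by
  have hmne : (monomial (E - L) (1 : K)) ≠ 0 := fun hc =>
    (one_ne_zero : (1 : K) ≠ 0) (MvPolynomial.monomial_eq_zero.mp hc)
  rw [mdeg_mul m hmne hh, mdeg_monomial m one_ne_zero]
  have hEL : E - L + L = E := tsub_add_cancel_of_le hLE
  have := syn_add_lt_left m (E - L) hlt
  rwa [hEL] at this

end P3

section P4

variable {K : Type*} [Field K] {n r s : ℕ} (m : MonomialOrder (Fin 2 × ℕ))

theorem split_sub {u v E : (Fin 2 × ℕ) →₀ ℕ} (h : u + v ≤ E) :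
    E - u = (E - (u + v)) + v := by
  have hv : v ≤ E - u := le_tsub_of_add_le_left h
  rw [tsub_add_eq_tsub_tsub]
  exact (tsub_add_cancel_of_le hv).symm

theorem sum_map_neg {α : Type*} (L : List α) (f : α → MvPolynomial (Fin 2 × ℕ) K) :
    (L.map fun x => -(f x)).sum = -(L.map f).sum := by
  induction L with
  | nil => simp
  | cons x L ih => simp [ih]; abel

/-- The conditions a representation term must satisfy (single-pair version). -/
def TOK (K : Type*) [Field K] (n r s : ℕ) (m : MonomialOrder (Fin 2 × ℕ))
    (E : (Fin 2 × ℕ) →₀ ℕ) (x : MvPolynomial (Fin 2 × ℕ) K × (ℕ × ℕ)) : Prop :=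
  Adm K n r s x.2 ∧ (x.1 * sparseMinor K n r s x.2.1 x.2.2 = 0 ∨
    m.toSyn (mdeg m (x.1 * sparseMinor K n r s x.2.1 x.2.2)) < m.toSyn E)

theorem TOK_neg {E : (Fin 2 × ℕ) →₀ ℕ} {x : MvPolynomial (Fin 2 × ℕ) K × (ℕ × ℕ)}
    (h : TOK K n r s m E x) : TOK K n r s m E (-x.1, x.2) := by
  refine ⟨h.1, ?_⟩
  rcases h.2 with h2 | h2
  · left
    rw [neg_mul]
    rw [h2, neg_zero]
  · right
    rwa [neg_mul, mdeg_neg]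

/-- S-pair reduction for two minors in the same row position `a`: columns `(a,b)` and `(a,d)`. -/
theorem single_row (h1 : r + s ≤ n)
    (hdiag : ∀ i j : ℕ, 1 ≤ i → i < j → j ≤ n → sparseMinor K n r s i j ≠ 0 →
      mdeg m (sparseMinor K n r s i j) =
        Finsupp.single ((0 : Fin 2), i) 1 + Finsupp.single ((1 : Fin 2), j) 1)
    (a b d : ℕ) (hab : Adm K n r s (a, b)) (had : Adm K n r s (a, d))
    (hbd : b < d) {E : (Fin 2 × ℕ) →₀ ℕ} (hE : dg a b ≤ E) (hE' : dg a d ≤ E) :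
    ∃ L : List (MvPolynomial (Fin 2 × ℕ) K × (ℕ × ℕ)),
      (∀ x ∈ L, TOK K n r s m E x) ∧
      (L.map fun x => x.1 * sparseMinor K n r s x.2.1 x.2.2).sum =
        monomial (E - dg a b) (1 : K) * sparseMinor K n r s a b -
        monomial (E - dg a d) (1 : K) * sparseMinor K n r s a d := by
  classical
  obtain ⟨ha1, hab', hbn, habne⟩ := hab
  obtain ⟨-, had', hdn, hadne⟩ := had
  have hdab := diag_entries_ne_zero h1 hab' habne
  have hdad := diag_entries_ne_zero h1 had' hadne
  set lcm : (Fin 2 × ℕ) →₀ ℕ := dg a b + Finsupp.single ((1 : Fin 2), d) 1 with hlcm_def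
  have hlcm2 : lcm = dg a d + Finsupp.single ((1 : Fin 2), b) 1 := by
    rw [hlcm_def, dg_def, dg_def]; abel
  have hlcmE : lcm ≤ E := by
    rw [Finsupp.le_def]
    intro v
    have h1v := Finsupp.le_def.mp hE v
    have h2v := Finsupp.le_def.mp hE' v
    rw [hlcm_def, Finsupp.add_apply, Finsupp.single_apply]
    by_cases hv : ((1 : Fin 2), d) = v
    · subst hv
      rw [if_pos rfl]
      rw [dg_apply_snd] at h1v h2v ⊢
      rw [if_neg (by omega : ¬ b = d)]
      rw [if_pos rfl] at h2v
      omega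
    · rw [if_neg hv, add_zero]
      exact h1v
  have mono1 : monomial (E - dg a b) (1 : K) =
      monomial (E - lcm) (1 : K) * X ((1 : Fin 2), d) := by
    rw [X, monomial_mul, mul_one, split_sub (hlcm_def ▸ hlcmE)]
  have mono2 : monomial (E - dg a d) (1 : K) =
      monomial (E - lcm) (1 : K) * X ((1 : Fin 2), b) := by
    have harg : E - dg a d = (E - lcm) + Finsupp.single ((1 : Fin 2), b) 1 := by
      rw [hlcm2]
      exact split_sub (by rw [← hlcm2]; exact hlcmE)
    rw [X, monomial_mul, mul_one, harg]
  have e1b : sparseEntry K n r s 1 b = X ((1 : Fin 2), b) := entry1_eq_X hdab.2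
  have e1d : sparseEntry K n r s 1 d = X ((1 : Fin 2), d) := entry1_eq_X hdad.2
  have key : sparseEntry K n r s 1 d * sparseMinor K n r s a b -
      sparseEntry K n r s 1 b * sparseMinor K n r s a d =
      -(sparseEntry K n r s 1 a * sparseMinor K n r s b d) := by
    rw [sparseMinor, sparseMinor, sparseMinor]; ring
  set c₀ : MvPolynomial (Fin 2 × ℕ) K :=
    -(monomial (E - lcm) (1 : K) * sparseEntry K n r s 1 a) with hc₀
  have hT : monomial (E - dg a b) (1 : K) * sparseMinor K n r s a b -
      monomial (E - dg a d) (1 : K) * sparseMinor K n r s a d =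
      c₀ * sparseMinor K n r s b d := by
    rw [mono1, mono2, ← e1b, ← e1d, mul_assoc, mul_assoc, ← mul_sub, key, hc₀]
    ring
  by_cases hz : c₀ * sparseMinor K n r s b d = 0
  · refine ⟨[], ?_, ?_⟩
    · intro x hx
      exact absurd hx (List.not_mem_nil)
    · rw [List.map_nil, List.sum_nil, hT, hz]
  · have hmbd : sparseMinor K n r s b d ≠ 0 := right_ne_zero_of_mul hz
    have he1a : sparseEntry K n r s 1 a ≠ 0 := by
      intro h
      apply hz
      rw [hc₀, h, mul_zero, neg_zero, zero_mul]
    have hAdm_bd : Adm K n r s (b, d) := ⟨by omega, hbd, hdn, hmbd⟩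
    have hdbd := diag_entries_ne_zero h1 hbd hmbd
    refine ⟨[(c₀, (b, d))], ?_, ?_⟩
    · intro x hx
      rw [List.mem_singleton] at hx
      subst hx
      refine ⟨hAdm_bd, Or.inr ?_⟩
      have hrw : c₀ * sparseMinor K n r s b d =
          monomial (E - lcm) (1 : K) * (-(X ((1 : Fin 2), a) * sparseMinor K n r s b d)) := by
        rw [hc₀, entry1_eq_X he1a]
        ring
      rw [hrw]
      apply bound_mono m _ hlcmE
      · have hmdh : mdeg m (-(X ((1 : Fin 2), a) * sparseMinor K n r s b d)) =
            Finsupp.single ((1 : Fin 2), a) 1 + dg b d := by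
          rw [mdeg_neg, mdeg_mul m (X_ne_zero _) hmbd, X, mdeg_monomial m one_ne_zero,
            hdiag b d (by omega) hbd hdn hmbd, ← dg_def]
        rw [hmdh]
        have idL : Finsupp.single ((1 : Fin 2), a) 1 + dg b d =
            Finsupp.single ((1 : Fin 2), d) 1 + dg b a := by
          simp only [dg_def]; abel
        have idR : lcm = Finsupp.single ((1 : Fin 2), d) 1 + dg a b := by
          rw [hlcm_def]; simp only [dg_def]; abel
        rw [idL, idR]
        exact syn_add_lt_left m _ (anti_lt_diag m hdiag ha1 hab' (le_trans (le_of_lt hbd) hdn)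
          habne hdbd.1 he1a)
      · exact fun h => hz (by rw [hrw, h, mul_zero])
    · rw [List.map_singleton, List.sum_singleton, hT]

theorem dg_disjoint {a b c d : ℕ} (hac : a ≠ c) (hbd : b ≠ d) (v : Fin 2 × ℕ) :
    dg a b v = 0 ∨ dg c d v = 0 := by
  obtain ⟨u, t⟩ := v
  by_cases hu : u = 0
  · subst hu
    rw [dg_apply_fst, dg_apply_fst]
    by_cases hat : a = t
    · right
      rw [if_neg (by omega : ¬ c = t)]
    · left
      rw [if_neg hat]
  · have hu1 : u = 1 := by
      have hlt := u.isLt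
      have hne : u.val ≠ 0 := fun h => hu (Fin.ext h)
      exact Fin.ext (by omega)
    subst hu1
    rw [dg_apply_snd, dg_apply_snd]
    by_cases hbt : b = t
    · right
      rw [if_neg (by omega : ¬ d = t)]
    · left
      rw [if_neg hbt]

theorem rep_flip {E : (Fin 2 × ℕ) →₀ ℕ} {L : List (MvPolynomial (Fin 2 × ℕ) K × (ℕ × ℕ))}
    {T : MvPolynomial (Fin 2 × ℕ) K}
    (hall : ∀ x ∈ L, TOK K n r s m E x)
    (hsum : (L.map fun x => x.1 * sparseMinor K n r s x.2.1 x.2.2).sum = T) :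
    ∃ L' : List (MvPolynomial (Fin 2 × ℕ) K × (ℕ × ℕ)),
      (∀ x ∈ L', TOK K n r s m E x) ∧
      (L'.map fun x => x.1 * sparseMinor K n r s x.2.1 x.2.2).sum = -T := by
  refine ⟨L.map fun x => (-x.1, x.2), ?_, ?_⟩
  · intro x hx
    rw [List.mem_map] at hx
    obtain ⟨y, hy, hxy⟩ := hx
    subst hxy
    exact TOK_neg m (hall y hy)
  · rw [List.map_map]
    have hfun : ((fun x : MvPolynomial (Fin 2 × ℕ) K × (ℕ × ℕ) =>
        x.1 * sparseMinor K n r s x.2.1 x.2.2) ∘ fun x => (-x.1, x.2)) =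
        fun x : MvPolynomial (Fin 2 × ℕ) K × (ℕ × ℕ) =>
          -(x.1 * sparseMinor K n r s x.2.1 x.2.2) := by
      funext x
      simp [neg_mul]
    rw [hfun]
    exact (sum_map_neg L fun x => x.1 * sparseMinor K n r s x.2.1 x.2.2).trans
      (congrArg Neg.neg hsum)

/-- S-pair reduction for two minors in the same column position `d`. -/
theorem single_col (h1 : r + s ≤ n)
    (hdiag : ∀ i j : ℕ, 1 ≤ i → i < j → j ≤ n → sparseMinor K n r s i j ≠ 0 →
      mdeg m (sparseMinor K n r s i j) =
        Finsupp.single ((0 : Fin 2), i) 1 + Finsupp.single ((1 : Fin 2), j) 1)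
    (a c d : ℕ) (had : Adm K n r s (a, d)) (hcd : Adm K n r s (c, d))
    (hac : a < c) {E : (Fin 2 × ℕ) →₀ ℕ} (hE : dg a d ≤ E) (hE' : dg c d ≤ E) :
    ∃ L : List (MvPolynomial (Fin 2 × ℕ) K × (ℕ × ℕ)),
      (∀ x ∈ L, TOK K n r s m E x) ∧
      (L.map fun x => x.1 * sparseMinor K n r s x.2.1 x.2.2).sum =
        monomial (E - dg a d) (1 : K) * sparseMinor K n r s a d -
        monomial (E - dg c d) (1 : K) * sparseMinor K n r s c d := by
  classical
  obtain ⟨ha1, had', hdn, hadne⟩ := had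
  obtain ⟨hc1, hcd', -, hcdne⟩ := hcd
  have hdad := diag_entries_ne_zero h1 had' hadne
  have hdcd := diag_entries_ne_zero h1 hcd' hcdne
  set lcm : (Fin 2 × ℕ) →₀ ℕ := dg a d + Finsupp.single ((0 : Fin 2), c) 1 with hlcm_def
  have hlcm2 : lcm = dg c d + Finsupp.single ((0 : Fin 2), a) 1 := by
    rw [hlcm_def]; simp only [dg_def]; abel
  have hlcmE : lcm ≤ E := by
    rw [Finsupp.le_def]
    intro v
    have h1v := Finsupp.le_def.mp hE v
    have h2v := Finsupp.le_def.mp hE' v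
    rw [hlcm_def, Finsupp.add_apply, Finsupp.single_apply]
    by_cases hv : ((0 : Fin 2), c) = v
    · subst hv
      rw [if_pos rfl]
      rw [dg_apply_fst] at h1v h2v ⊢
      rw [if_neg (by omega : ¬ a = c)]
      rw [if_pos rfl] at h2v
      omega
    · rw [if_neg hv, add_zero]
      exact h1v
  have mono1 : monomial (E - dg a d) (1 : K) =
      monomial (E - lcm) (1 : K) * X ((0 : Fin 2), c) := by
    rw [X, monomial_mul, mul_one, split_sub (hlcm_def ▸ hlcmE)]
  have mono2 : monomial (E - dg c d) (1 : K) =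
      monomial (E - lcm) (1 : K) * X ((0 : Fin 2), a) := by
    have harg : E - dg c d = (E - lcm) + Finsupp.single ((0 : Fin 2), a) 1 := by
      rw [hlcm2]
      exact split_sub (by rw [← hlcm2]; exact hlcmE)
    rw [X, monomial_mul, mul_one, harg]
  have e0a : sparseEntry K n r s 0 a = X ((0 : Fin 2), a) := entry0_eq_X hdad.1
  have e0c : sparseEntry K n r s 0 c = X ((0 : Fin 2), c) := entry0_eq_X hdcd.1
  have key : sparseEntry K n r s 0 c * sparseMinor K n r s a d -
      sparseEntry K n r s 0 a * sparseMinor K n r s c d =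
      sparseEntry K n r s 0 d * sparseMinor K n r s a c := by
    simp only [sparseMinor]; ring
  set c₀ : MvPolynomial (Fin 2 × ℕ) K :=
    monomial (E - lcm) (1 : K) * sparseEntry K n r s 0 d with hc₀
  have hT : monomial (E - dg a d) (1 : K) * sparseMinor K n r s a d -
      monomial (E - dg c d) (1 : K) * sparseMinor K n r s c d =
      c₀ * sparseMinor K n r s a c := by
    rw [mono1, mono2, ← e0a, ← e0c, mul_assoc, mul_assoc, ← mul_sub, key, hc₀]
    ring
  by_cases hz : c₀ * sparseMinor K n r s a c = 0
  · refine ⟨[], ?_, ?_⟩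
    · intro x hx
      exact absurd hx (List.not_mem_nil)
    · rw [List.map_nil, List.sum_nil, hT, hz]
  · have hmac : sparseMinor K n r s a c ≠ 0 := right_ne_zero_of_mul hz
    have he0d : sparseEntry K n r s 0 d ≠ 0 := by
      intro h
      apply hz
      rw [hc₀, h, mul_zero, zero_mul]
    have hAdm_ac : Adm K n r s (a, c) := ⟨ha1, hac, by omega, hmac⟩
    have hdac := diag_entries_ne_zero h1 hac hmac
    refine ⟨[(c₀, (a, c))], ?_, ?_⟩
    · intro x hx
      rw [List.mem_singleton] at hx
      subst hx
      refine ⟨hAdm_ac, Or.inr ?_⟩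
      have hrw : c₀ * sparseMinor K n r s a c =
          monomial (E - lcm) (1 : K) * (X ((0 : Fin 2), d) * sparseMinor K n r s a c) := by
        rw [hc₀, entry0_eq_X he0d]
        ring
      rw [hrw]
      apply bound_mono m _ hlcmE
      · have hmdh : mdeg m (X ((0 : Fin 2), d) * sparseMinor K n r s a c) =
            Finsupp.single ((0 : Fin 2), d) 1 + dg a c := by
          rw [mdeg_mul m (X_ne_zero _) hmac, X, mdeg_monomial m one_ne_zero,
            hdiag a c ha1 hac (by omega) hmac, ← dg_def]
        rw [hmdh]
        have idL : Finsupp.single ((0 : Fin 2), d) 1 + dg a c =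
            Finsupp.single ((0 : Fin 2), a) 1 + dg d c := by
          simp only [dg_def]; abel
        have idR : lcm = Finsupp.single ((0 : Fin 2), a) 1 + dg c d := by
          rw [hlcm_def]; simp only [dg_def]; abel
        rw [idL, idR]
        exact syn_add_lt_left m _ (anti_lt_diag m hdiag hc1 hcd' hdn hcdne he0d hdac.2)
      · exact fun h => hz (by rw [hrw, h, mul_zero])
    · rw [List.map_singleton, List.sum_singleton, hT]

/-- S-pair reduction for two minors with coprime leading terms. -/
theorem single_cop (h1 : r + s ≤ n)
    (hdiag : ∀ i j : ℕ, 1 ≤ i → i < j → j ≤ n → sparseMinor K n r s i j ≠ 0 →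
      mdeg m (sparseMinor K n r s i j) =
        Finsupp.single ((0 : Fin 2), i) 1 + Finsupp.single ((1 : Fin 2), j) 1)
    (a b c d : ℕ) (hab : Adm K n r s (a, b)) (hcd : Adm K n r s (c, d))
    (hac : a ≠ c) (hbd : b ≠ d) {E : (Fin 2 × ℕ) →₀ ℕ} (hE : dg a b ≤ E) (hE' : dg c d ≤ E) :
    ∃ L : List (MvPolynomial (Fin 2 × ℕ) K × (ℕ × ℕ)),
      (∀ x ∈ L, TOK K n r s m E x) ∧
      (L.map fun x => x.1 * sparseMinor K n r s x.2.1 x.2.2).sum =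
        monomial (E - dg a b) (1 : K) * sparseMinor K n r s a b -
        monomial (E - dg c d) (1 : K) * sparseMinor K n r s c d := by
  classical
  obtain ⟨ha1, hab', hbn, habne⟩ := hab
  obtain ⟨hc1, hcd', hdn, hcdne⟩ := hcd
  have hdab := diag_entries_ne_zero h1 hab' habne
  have hdcd := diag_entries_ne_zero h1 hcd' hcdne
  set lcm : (Fin 2 × ℕ) →₀ ℕ := dg a b + dg c d with hlcm_def
  have hlcmE : lcm ≤ E := by
    rw [Finsupp.le_def]
    intro v
    have h1v := Finsupp.le_def.mp hE v
    have h2v := Finsupp.le_def.mp hE' v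
    rw [hlcm_def, Finsupp.add_apply]
    rcases dg_disjoint hac hbd v with h | h
    · rw [h, zero_add]
      exact h2v
    · rw [h, add_zero]
      exact h1v
  have mono1 : monomial (E - dg a b) (1 : K) =
      monomial (E - lcm) (1 : K) * monomial (dg c d) (1 : K) := by
    rw [monomial_mul, mul_one, split_sub (hlcm_def ▸ hlcmE)]
  have mono2 : monomial (E - dg c d) (1 : K) =
      monomial (E - lcm) (1 : K) * monomial (dg a b) (1 : K) := by
    have harg : E - dg c d = (E - lcm) + dg a b := by
      have h' : dg c d + dg a b ≤ E := by
        rw [add_comm]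
        exact hlcm_def ▸ hlcmE
      have := split_sub h'
      rwa [show dg c d + dg a b = lcm by rw [hlcm_def]; abel] at this
    rw [monomial_mul, mul_one, harg]
  have hmab : sparseEntry K n r s 0 a * sparseEntry K n r s 1 b = monomial (dg a b) (1 : K) := by
    rw [entry0_eq_X hdab.1, entry1_eq_X hdab.2, X, X, monomial_mul, one_mul, ← dg_def]
  have hmcd : sparseEntry K n r s 0 c * sparseEntry K n r s 1 d = monomial (dg c d) (1 : K) := by
    rw [entry0_eq_X hdcd.1, entry1_eq_X hdcd.2, X, X, monomial_mul, one_mul, ← dg_def]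
  have key : (sparseEntry K n r s 0 c * sparseEntry K n r s 1 d) * sparseMinor K n r s a b -
      (sparseEntry K n r s 0 a * sparseEntry K n r s 1 b) * sparseMinor K n r s c d =
      (-(sparseEntry K n r s 0 b * sparseEntry K n r s 1 a)) * sparseMinor K n r s c d +
      (sparseEntry K n r s 0 d * sparseEntry K n r s 1 c) * sparseMinor K n r s a b := by
    simp only [sparseMinor]; ring
  have hT : monomial (E - dg a b) (1 : K) * sparseMinor K n r s a b -
      monomial (E - dg c d) (1 : K) * sparseMinor K n r s c d =
      (monomial (E - lcm) (1 : K) * (-(sparseEntry K n r s 0 b * sparseEntry K n r s 1 a))) *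
        sparseMinor K n r s c d +
      (monomial (E - lcm) (1 : K) * (sparseEntry K n r s 0 d * sparseEntry K n r s 1 c)) *
        sparseMinor K n r s a b := by
    rw [mono1, mono2, ← hmab, ← hmcd]
    linear_combination (monomial (E - lcm) (1 : K)) * key
  refine ⟨[(monomial (E - lcm) (1 : K) * (-(sparseEntry K n r s 0 b * sparseEntry K n r s 1 a)),
      (c, d)),
    (monomial (E - lcm) (1 : K) * (sparseEntry K n r s 0 d * sparseEntry K n r s 1 c),
      (a, b))], ?_, ?_⟩
  · intro x hx
    rw [List.mem_cons, List.mem_singleton] at hx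
    rcases hx with hx | hx <;> subst hx
    · refine ⟨⟨hc1, hcd', hdn, hcdne⟩, ?_⟩
      by_cases hz : (monomial (E - lcm) (1 : K) *
          (-(sparseEntry K n r s 0 b * sparseEntry K n r s 1 a))) *
          sparseMinor K n r s c d = 0
      · exact Or.inl hz
      · right
        have he0b : sparseEntry K n r s 0 b ≠ 0 := by
          intro h
          exact hz (by rw [h, zero_mul, neg_zero, mul_zero, zero_mul])
        have he1a : sparseEntry K n r s 1 a ≠ 0 := by
          intro h
          exact hz (by rw [h, mul_zero, neg_zero, mul_zero, zero_mul])
        have hrw : (monomial (E - lcm) (1 : K) *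
            (-(sparseEntry K n r s 0 b * sparseEntry K n r s 1 a))) *
            sparseMinor K n r s c d =
            monomial (E - lcm) (1 : K) *
              (-(monomial (dg b a) (1 : K) * sparseMinor K n r s c d)) := by
          rw [entry0_eq_X he0b, entry1_eq_X he1a, X, X]
          rw [show (monomial (Finsupp.single ((0 : Fin 2), b) 1) (1 : K)) *
            monomial (Finsupp.single ((1 : Fin 2), a) 1) 1 = monomial (dg b a) 1 by
            rw [monomial_mul, one_mul, ← dg_def]]
          ring
        rw [hrw]
        apply bound_mono m _ hlcmE
        · rw [mdeg_neg, mdeg_mul m (fun hh =>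
            (one_ne_zero : (1:K) ≠ 0) (MvPolynomial.monomial_eq_zero.mp hh)) hcdne,
            mdeg_monomial m one_ne_zero, hdiag c d hc1 hcd' hdn hcdne, ← dg_def]
          have idL : dg b a + dg c d = dg c d + dg b a := by abel
          have idR : lcm = dg c d + dg a b := by rw [hlcm_def]; abel
          rw [idL, idR]
          exact syn_add_lt_left m _
            (anti_lt_diag m hdiag ha1 hab' hbn habne he0b he1a)
        · intro h
          exact hz (by rw [hrw, h, mul_zero])
    · refine ⟨⟨ha1, hab', hbn, habne⟩, ?_⟩
      by_cases hz : (monomial (E - lcm) (1 : K) *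
          (sparseEntry K n r s 0 d * sparseEntry K n r s 1 c)) *
          sparseMinor K n r s a b = 0
      · exact Or.inl hz
      · right
        have he0d : sparseEntry K n r s 0 d ≠ 0 := by
          intro h
          exact hz (by rw [h, zero_mul, mul_zero, zero_mul])
        have he1c : sparseEntry K n r s 1 c ≠ 0 := by
          intro h
          exact hz (by rw [h, mul_zero, mul_zero, zero_mul])
        have hrw : (monomial (E - lcm) (1 : K) *
            (sparseEntry K n r s 0 d * sparseEntry K n r s 1 c)) *
            sparseMinor K n r s a b =
            monomial (E - lcm) (1 : K) *
              (monomial (dg d c) (1 : K) * sparseMinor K n r s a b) := by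
          rw [entry0_eq_X he0d, entry1_eq_X he1c, X, X]
          rw [show (monomial (Finsupp.single ((0 : Fin 2), d) 1) (1 : K)) *
            monomial (Finsupp.single ((1 : Fin 2), c) 1) 1 = monomial (dg d c) 1 by
            rw [monomial_mul, one_mul, ← dg_def]]
          ring
        rw [hrw]
        apply bound_mono m _ hlcmE
        · rw [mdeg_mul m (fun hh =>
            (one_ne_zero : (1:K) ≠ 0) (MvPolynomial.monomial_eq_zero.mp hh)) habne,
            mdeg_monomial m one_ne_zero, hdiag a b ha1 hab' hbn habne, ← dg_def]
          have idL : dg d c + dg a b = dg a b + dg d c := by abel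
          rw [idL, hlcm_def]
          exact syn_add_lt_left m _
            (anti_lt_diag m hdiag hc1 hcd' hdn hcdne he0d he1c)
        · intro h
          exact hz (by rw [hrw, h, mul_zero])
  · rw [List.map_cons, List.map_cons, List.map_nil, List.sum_cons, List.sum_cons,
      List.sum_nil, add_zero, hT]

/-- S-pair reduction for any two admissible minors. -/
theorem single_spair (h1 : r + s ≤ n)
    (hdiag : ∀ i j : ℕ, 1 ≤ i → i < j → j ≤ n → sparseMinor K n r s i j ≠ 0 →
      mdeg m (sparseMinor K n r s i j) =
        Finsupp.single ((0 : Fin 2), i) 1 + Finsupp.single ((1 : Fin 2), j) 1)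
    (p q : ℕ × ℕ) (hp : Adm K n r s p) (hq : Adm K n r s q)
    {E : (Fin 2 × ℕ) →₀ ℕ} (hpE : dg p.1 p.2 ≤ E) (hqE : dg q.1 q.2 ≤ E) :
    ∃ L : List (MvPolynomial (Fin 2 × ℕ) K × (ℕ × ℕ)),
      (∀ x ∈ L, TOK K n r s m E x) ∧
      (L.map fun x => x.1 * sparseMinor K n r s x.2.1 x.2.2).sum =
        monomial (E - dg p.1 p.2) (1 : K) * sparseMinor K n r s p.1 p.2 -
        monomial (E - dg q.1 q.2) (1 : K) * sparseMinor K n r s q.1 q.2 := by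
  obtain ⟨a, b⟩ := p
  obtain ⟨c, d⟩ := q
  simp only at hpE hqE ⊢
  by_cases hac : a = c
  · subst hac
    by_cases hbd : b = d
    · subst hbd
      refine ⟨[], ?_, ?_⟩
      · intro x hx
        exact absurd hx (List.not_mem_nil)
      · rw [List.map_nil, List.sum_nil, sub_self]
    · rcases Nat.lt_or_ge b d with h | h
      · exact single_row m h1 hdiag a b d hp hq h hpE hqE
      · have hdb : d < b := by omega
        obtain ⟨L, hL, hsum⟩ := single_row m h1 hdiag a d b hq hp hdb hqE hpE
        obtain ⟨L', hL', hsum'⟩ := rep_flip m hL hsum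
        rw [neg_sub] at hsum'
        exact ⟨L', hL', hsum'⟩
  · by_cases hbd : b = d
    · subst hbd
      rcases Nat.lt_or_ge a c with h | h
      · exact single_col m h1 hdiag a c b hp hq h hpE hqE
      · have hca : c < a := by omega
        obtain ⟨L, hL, hsum⟩ := single_col m h1 hdiag c a b hq hp hca hqE hpE
        obtain ⟨L', hL', hsum'⟩ := rep_flip m hL hsum
        rw [neg_sub] at hsum'
        exact ⟨L', hL', hsum'⟩
    · exact single_cop m h1 hdiag a b c d hp hq hac hbd hpE hqE

end P4

section P5

variable {K : Type*} [Field K] {n r s : ℕ} (m : MonomialOrder (Fin 2 × ℕ))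

/-- Conditions for a term in a representation by `N`-fold products of minors. -/
def TOKL (K : Type*) [Field K] (n r s : ℕ) (m : MonomialOrder (Fin 2 × ℕ)) (N : ℕ)
    (E : (Fin 2 × ℕ) →₀ ℕ) (x : MvPolynomial (Fin 2 × ℕ) K × List (ℕ × ℕ)) : Prop :=
  x.2.length = N ∧ (∀ p ∈ x.2, Adm K n r s p) ∧
    (x.1 * prodOf K n r s x.2 = 0 ∨
      m.toSyn (mdeg m (x.1 * prodOf K n r s x.2)) < m.toSyn E)

/-- The polynomial represented by a list of terms. -/
noncomputable def msum (K : Type*) [Field K] (n r s : ℕ)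
    (L : List (MvPolynomial (Fin 2 × ℕ) K × List (ℕ × ℕ))) : MvPolynomial (Fin 2 × ℕ) K :=
  (L.map fun x => x.1 * prodOf K n r s x.2).sum

theorem msum_nil : msum K n r s [] = 0 := rfl

theorem msum_append (L1 L2 : List (MvPolynomial (Fin 2 × ℕ) K × List (ℕ × ℕ))) :
    msum K n r s (L1 ++ L2) = msum K n r s L1 + msum K n r s L2 := by
  rw [msum, List.map_append, List.sum_append, msum, msum]

theorem msum_cons (x : MvPolynomial (Fin 2 × ℕ) K × List (ℕ × ℕ)) (L) :
    msum K n r s (x :: L) = x.1 * prodOf K n r s x.2 + msum K n r s L := by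
  rw [msum, List.map_cons, List.sum_cons, msum]

theorem TOKL_neg {N : ℕ} {E : (Fin 2 × ℕ) →₀ ℕ} {x : MvPolynomial (Fin 2 × ℕ) K × List (ℕ × ℕ)}
    (h : TOKL K n r s m N E x) : TOKL K n r s m N E (-x.1, x.2) := by
  refine ⟨h.1, h.2.1, ?_⟩
  rcases h.2.2 with h2 | h2
  · left
    rw [neg_mul, h2, neg_zero]
  · right
    rwa [neg_mul, mdeg_neg]

theorem rep_flipL {N : ℕ} {E : (Fin 2 × ℕ) →₀ ℕ}
    {L : List (MvPolynomial (Fin 2 × ℕ) K × List (ℕ × ℕ))}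
    (hall : ∀ x ∈ L, TOKL K n r s m N E x) :
    (∀ x ∈ L.map (fun x => (-x.1, x.2)), TOKL K n r s m N E x) ∧
      msum K n r s (L.map fun x => (-x.1, x.2)) = -(msum K n r s L) := by
  constructor
  · intro x hx
    rw [List.mem_map] at hx
    obtain ⟨y, hy, hxy⟩ := hx
    subst hxy
    exact TOKL_neg m (hall y hy)
  · rw [msum, List.map_map]
    have hfun : ((fun x : MvPolynomial (Fin 2 × ℕ) K × List (ℕ × ℕ) =>
        x.1 * prodOf K n r s x.2) ∘ fun x => (-x.1, x.2)) =
        fun x : MvPolynomial (Fin 2 × ℕ) K × List (ℕ × ℕ) =>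
          -(x.1 * prodOf K n r s x.2) := by
      funext x
      simp [neg_mul]
    rw [hfun]
    exact sum_map_neg L fun x => x.1 * prodOf K n r s x.2

theorem lift_sum (p : ℕ × ℕ) (L : List (MvPolynomial (Fin 2 × ℕ) K × List (ℕ × ℕ))) :
    msum K n r s (L.map fun y => (y.1, p :: y.2)) =
      sparseMinor K n r s p.1 p.2 * msum K n r s L := by
  induction L with
  | nil => rw [List.map_nil, msum_nil, mul_zero]
  | cons x L ih =>
    rw [List.map_cons, msum_cons, msum_cons, ih, prodOf_cons, mul_add]
    congr 1
    ring

theorem lift_terms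
    (hdiag : ∀ i j : ℕ, 1 ≤ i → i < j → j ≤ n → sparseMinor K n r s i j ≠ 0 →
      mdeg m (sparseMinor K n r s i j) =
        Finsupp.single ((0 : Fin 2), i) 1 + Finsupp.single ((1 : Fin 2), j) 1)
    {N : ℕ} {E' : (Fin 2 × ℕ) →₀ ℕ} {p : ℕ × ℕ} (hp : Adm K n r s p)
    {L : List (MvPolynomial (Fin 2 × ℕ) K × List (ℕ × ℕ))}
    (hall : ∀ x ∈ L, TOKL K n r s m N E' x) :
    ∀ x ∈ L.map (fun y => (y.1, p :: y.2)), TOKL K n r s m (N + 1) (dg p.1 p.2 + E') x := by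
  intro x hx
  rw [List.mem_map] at hx
  obtain ⟨y, hy, hxy⟩ := hx
  subst hxy
  obtain ⟨hylen, hyAdm, hybd⟩ := hall y hy
  refine ⟨by rw [List.length_cons, hylen], ?_, ?_⟩
  · intro q hq
    rcases List.mem_cons.mp hq with h | h
    · subst h; exact hp
    · exact hyAdm q h
  · by_cases hz : y.1 * prodOf K n r s y.2 = 0
    · left
      rw [prodOf_cons]
      rw [show y.1 * (sparseMinor K n r s p.1 p.2 * prodOf K n r s y.2) =
        sparseMinor K n r s p.1 p.2 * (y.1 * prodOf K n r s y.2) by ring, hz, mul_zero]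
    · rcases hybd with h | h
      · exact absurd h hz
      · right
        rw [prodOf_cons, show y.1 * (sparseMinor K n r s p.1 p.2 * prodOf K n r s y.2) =
          sparseMinor K n r s p.1 p.2 * (y.1 * prodOf K n r s y.2) by ring,
          mdeg_mul m hp.2.2.2 hz, hdiag p.1 p.2 hp.1 hp.2.1 hp.2.2.1 hp.2.2.2, ← dg_def]
        exact syn_add_lt_left m _ h

theorem list_max (l : List ℕ) (hl : l ≠ []) : ∃ a ∈ l, ∀ b ∈ l, b ≤ a := by
  induction l with
  | nil => exact absurd rfl hl
  | cons x l ih =>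
    rcases eq_or_ne l [] with h | h
    · subst h
      refine ⟨x, List.mem_cons_self, ?_⟩
      intro b hb
      rcases List.mem_cons.mp hb with h | h
      · omega
      · exact absurd h (List.not_mem_nil)
    · obtain ⟨a, ha, hmax⟩ := ih h
      rcases Nat.le_total x a with hxa | hax
      · refine ⟨a, List.mem_cons_of_mem x ha, ?_⟩
        intro b hb
        rcases List.mem_cons.mp hb with h | h
        · omega
        · exact hmax b h
      · refine ⟨x, List.mem_cons_self, ?_⟩
        intro b hb
        rcases List.mem_cons.mp hb with h | h
        · omega
        · exact le_trans (hmax b h) hax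

end P5

section P6

variable {K : Type*} [Field K] {n r s : ℕ} (m : MonomialOrder (Fin 2 × ℕ))

/-- The master statement: S-pairs of `N`-fold products of minors admit representations with
strictly smaller leading terms. -/
def MasterP (K : Type*) [Field K] (n r s : ℕ) (m : MonomialOrder (Fin 2 × ℕ)) (N : ℕ) : Prop :=
  ∀ ML NL : List (ℕ × ℕ), ML.length = N → NL.length = N →
    (∀ p ∈ ML, Adm K n r s p) → (∀ p ∈ NL, Adm K n r s p) →
    ∀ E : (Fin 2 × ℕ) →₀ ℕ, dsum ML ≤ E → dsum NL ≤ E →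
    ∃ L, (∀ x ∈ L, TOKL K n r s m N E x) ∧
      msum K n r s L = monomial (E - dsum ML) (1 : K) * prodOf K n r s ML -
        monomial (E - dsum NL) (1 : K) * prodOf K n r s NL

theorem peel_step
    (hdiag : ∀ i j : ℕ, 1 ≤ i → i < j → j ≤ n → sparseMinor K n r s i j ≠ 0 →
      mdeg m (sparseMinor K n r s i j) =
        Finsupp.single ((0 : Fin 2), i) 1 + Finsupp.single ((1 : Fin 2), j) 1)
    {N : ℕ} (hIH : MasterP K n r s m N) (p : ℕ × ℕ) (hp : Adm K n r s p)
    (ML' NL' : List (ℕ × ℕ)) (hlM : ML'.length = N) (hlN : NL'.length = N)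
    (hAM : ∀ x ∈ ML', Adm K n r s x) (hAN : ∀ x ∈ NL', Adm K n r s x)
    (E : (Fin 2 × ℕ) →₀ ℕ)
    (hME : dg p.1 p.2 + dsum ML' ≤ E) (hNE : dg p.1 p.2 + dsum NL' ≤ E) :
    ∃ L, (∀ x ∈ L, TOKL K n r s m (N + 1) E x) ∧
      msum K n r s L =
        monomial (E - (dg p.1 p.2 + dsum ML')) (1 : K) *
          (sparseMinor K n r s p.1 p.2 * prodOf K n r s ML') -
        monomial (E - (dg p.1 p.2 + dsum NL')) (1 : K) *
          (sparseMinor K n r s p.1 p.2 * prodOf K n r s NL') := by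
  have hdgE : dg p.1 p.2 ≤ E := le_trans le_self_add hME
  have hE'M : dsum ML' ≤ E - dg p.1 p.2 := le_tsub_of_add_le_left hME
  have hE'N : dsum NL' ≤ E - dg p.1 p.2 := le_tsub_of_add_le_left hNE
  obtain ⟨L', hall, hsum⟩ := hIH ML' NL' hlM hlN hAM hAN (E - dg p.1 p.2) hE'M hE'N
  refine ⟨L'.map fun y => (y.1, p :: y.2), ?_, ?_⟩
  · have := lift_terms m hdiag hp hall
    rwa [add_tsub_cancel_of_le hdgE] at this
  · rw [lift_sum, hsum, mul_sub]
    have e1 : E - dg p.1 p.2 - dsum ML' = E - (dg p.1 p.2 + dsum ML') := by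
      rw [tsub_add_eq_tsub_tsub]
    have e2 : E - dg p.1 p.2 - dsum NL' = E - (dg p.1 p.2 + dsum NL') := by
      rw [tsub_add_eq_tsub_tsub]
    rw [e1, e2]
    ring


theorem exists_perm_cons {α : Type*} [DecidableEq α] {a : α} {l : List α} (h : a ∈ l) :
    ∃ t, l.Perm (a :: t) :=
  ⟨@List.erase _ instBEqOfDecidableEq l a, List.perm_cons_erase h⟩

theorem caseC (h1 : r + s ≤ n)
    (hdiag : ∀ i j : ℕ, 1 ≤ i → i < j → j ≤ n → sparseMinor K n r s i j ≠ 0 →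
      mdeg m (sparseMinor K n r s i j) =
        Finsupp.single ((0 : Fin 2), i) 1 + Finsupp.single ((1 : Fin 2), j) 1)
    {N₀ : ℕ} (hIH : MasterP K n r s m N₀)
    (ML NL : List (ℕ × ℕ)) (hlM : ML.length = N₀ + 1) (hlN : NL.length = N₀ + 1)
    (hAM : ∀ x ∈ ML, Adm K n r s x) (hAN : ∀ x ∈ NL, Adm K n r s x)
    (hnocom : ∀ x ∈ ML, x ∉ NL) (hdeq : dsum ML = dsum NL)
    (a b b' : ℕ) (hpM : (a, b) ∈ ML) (hqN : (a, b') ∈ NL)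
    (hmax : ∀ x ∈ ML.map Prod.fst, x ≤ a) (hb : b' < b)
    (E : (Fin 2 × ℕ) →₀ ℕ) (hME : dsum ML ≤ E) :
    ∃ L, (∀ x ∈ L, TOKL K n r s m (N₀ + 1) E x) ∧
      msum K n r s L = monomial (E - dsum ML) (1 : K) * prodOf K n r s ML -
        monomial (E - dsum NL) (1 : K) * prodOf K n r s NL := by
  classical
  -- counts of second components agree
  have hc2 : ∀ c, (ML.map Prod.snd).count c = (NL.map Prod.snd).count c := by
    intro c
    have h := congrArg (fun f : (Fin 2 × ℕ) →₀ ℕ => f ((1 : Fin 2), c)) hdeq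
    rwa [dsum_apply_snd, dsum_apply_snd] at h
  -- find the pair (a₂, b') in ML
  have hb'N : b' ∈ NL.map Prod.snd := List.mem_map_of_mem (f := Prod.snd) hqN
  have hb'M : b' ∈ ML.map Prod.snd := by
    have := hc2 b'
    have hpos : 0 < (NL.map Prod.snd).count b' := List.count_pos_iff.mpr hb'N
    exact List.count_pos_iff.mp (by omega)
  obtain ⟨p₂, hp₂M, hp₂2⟩ := List.mem_map.mp hb'M
  obtain ⟨a₂, bb⟩ := p₂
  simp only at hp₂2
  subst bb
  have ha₂a : a₂ ≠ a := by
    intro h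
    subst h
    exact hnocom (a₂, b') hp₂M hqN
  have ha₂lt : a₂ < a :=
    lt_of_le_of_ne (hmax a₂ (List.mem_map_of_mem (f := Prod.fst) hp₂M)) ha₂a
  -- admissibility of the given pairs
  have hA_ab := hAM (a, b) hpM
  have hA_a₂b' := hAM (a₂, b') hp₂M
  have hA_ab' := hAN (a, b') hqN
  simp only [Adm] at hA_ab hA_a₂b' hA_ab'
  -- permutations
  obtain ⟨ML1, hpermM1⟩ := exists_perm_cons hpM
  have hp₂M1 : (a₂, b') ∈ ML1 := by
    have hmem := hpermM1.mem_iff.mp hp₂M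
    rcases List.mem_cons.mp hmem with h | h
    · exact absurd (congrArg Prod.snd h) (by simp; omega)
    · exact h
  obtain ⟨ML₂, hpermM2⟩ := exists_perm_cons hp₂M1
  have hperm : ML.Perm ((a, b) :: (a₂, b') :: ML₂) := hpermM1.trans (hpermM2.cons (a, b))
  obtain ⟨NL₁, hpermN⟩ := exists_perm_cons hqN
  -- lengths
  have hlen2 : ML₂.length = N₀ - 1 ∧ 1 ≤ N₀ := by
    have := hperm.length_eq
    simp only [List.length_cons] at this
    omega
  have hlenN₁ : NL₁.length = N₀ := by
    have := hpermN.length_eq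
    simp only [List.length_cons] at this
    omega
  -- admissibility of the tails
  have hA_ML₂ : ∀ x ∈ ML₂, Adm K n r s x := fun x hx =>
    hAM x (hperm.mem_iff.mpr (List.mem_cons_of_mem _ (List.mem_cons_of_mem _ hx)))
  have hA_NL₁ : ∀ x ∈ NL₁, Adm K n r s x := fun x hx =>
    hAN x (hpermN.mem_iff.mpr (List.mem_cons_of_mem _ hx))
  -- diagonal entries
  have hd_ab := diag_entries_ne_zero h1 hA_ab.2.1 hA_ab.2.2.2
  have hd_a₂b' := diag_entries_ne_zero h1 hA_a₂b'.2.1 hA_a₂b'.2.2.2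
  have hd_ab' := diag_entries_ne_zero h1 hA_ab'.2.1 hA_ab'.2.2.2
  -- the exchanged pair (a₂, b) is admissible
  have hA_a₂b : Adm K n r s (a₂, b) := by
    refine ⟨hA_a₂b'.1, lt_trans ha₂lt hA_ab.2.1, hA_ab.2.2.1, ?_⟩
    exact minor_ne_zero (ne_of_lt (lt_trans ha₂lt hA_ab.2.1)) hd_a₂b'.1 hd_ab.2
  -- dsum decompositions
  have hdsumM : dsum ML = dg a b + (dg a₂ b' + dsum ML₂) := by
    rw [dsum_perm hperm, dsum_cons, dsum_cons]
  have hdsumN : dsum NL = dg a b' + dsum NL₁ := by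
    rw [dsum_perm hpermN, dsum_cons]
  have hexch : dg a b' + dsum ((a₂, b) :: ML₂) = dsum ML := by
    rw [dsum_cons, hdsumM]
    simp only [dg_def]
    abel
  -- apply the peeling step to the shared factor (a, b')
  have hpeel := peel_step m hdiag hIH (a, b') hA_ab' ((a₂, b) :: ML₂) NL₁
    (by simp only [List.length_cons]; omega) hlenN₁
    (by
      intro x hx
      rcases List.mem_cons.mp hx with h | h
      · subst h; exact hA_a₂b
      · exact hA_ML₂ x h)
    hA_NL₁ E
    (by show dg a b' + dsum ((a₂, b) :: ML₂) ≤ E; rw [hexch]; exact hME)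
    (by show dg a b' + dsum NL₁ ≤ E; rw [← hdsumN, ← hdeq]; exact hME)
  obtain ⟨L₂, hallL₂, hsumL₂⟩ := hpeel
  rw [show dg (a, b').1 (a, b').2 + dsum ((a₂, b) :: ML₂) = dsum ML from hexch,
    show dg (a, b').1 (a, b').2 + dsum NL₁ = dsum ML by rw [← hdeq] at hdsumN; exact hdsumN.symm]
    at hsumL₂
  -- Pluecker decomposition of the product over ML
  have key : sparseMinor K n r s a b * sparseMinor K n r s a₂ b' =
      sparseMinor K n r s a b' * sparseMinor K n r s a₂ b +
      sparseMinor K n r s a₂ a * sparseMinor K n r s b' b := by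
    simp only [sparseMinor]; ring
  have hPdec : prodOf K n r s ML =
      sparseMinor K n r s a b' * prodOf K n r s ((a₂, b) :: ML₂) +
      sparseMinor K n r s a₂ a * (sparseMinor K n r s b' b * prodOf K n r s ML₂) := by
    rw [prodOf_perm hperm, prodOf_cons, prodOf_cons, prodOf_cons]
    simp only
    linear_combination (prodOf K n r s ML₂) * key
  have hPN : prodOf K n r s NL = sparseMinor K n r s a b' * prodOf K n r s NL₁ := by
    rw [prodOf_perm hpermN, prodOf_cons]
  rw [← hdeq]
  by_cases hz : prodOf K n r s ((a₂, a) :: (b', b) :: ML₂) = 0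
  · refine ⟨L₂, hallL₂, ?_⟩
    have hz' : sparseMinor K n r s a₂ a * (sparseMinor K n r s b' b * prodOf K n r s ML₂) = 0 := by
      rw [prodOf_cons, prodOf_cons] at hz
      exact hz
    rw [hsumL₂, hPdec, hPN, hz', add_zero]
  · have hz' := hz
    rw [prodOf_cons, prodOf_cons] at hz'
    have hza₂a : sparseMinor K n r s a₂ a ≠ 0 := left_ne_zero_of_mul hz'
    have hrest := right_ne_zero_of_mul hz'
    have hzb'b : sparseMinor K n r s b' b ≠ 0 := left_ne_zero_of_mul hrest
    have hA_a₂a : Adm K n r s (a₂, a) :=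
      ⟨hA_a₂b'.1, ha₂lt, le_trans (le_of_lt hA_ab.2.1) hA_ab.2.2.1, hza₂a⟩
    have hA_b'b : Adm K n r s (b', b) := ⟨by omega, hb, hA_ab.2.2.1, hzb'b⟩
    have hd_a₂a := diag_entries_ne_zero h1 ha₂lt hza₂a
    have hd_b'b := diag_entries_ne_zero h1 hb hzb'b
    have hAT1 : ∀ x ∈ (a₂, a) :: (b', b) :: ML₂, Adm K n r s x := by
      intro x hx
      rcases List.mem_cons.mp hx with h | h
      · subst h; exact hA_a₂a
      · rcases List.mem_cons.mp h with h | h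
        · subst h; exact hA_b'b
        · exact hA_ML₂ x h
    refine ⟨(monomial (E - dsum ML) (1 : K), (a₂, a) :: (b', b) :: ML₂) :: L₂, ?_, ?_⟩
    · intro x hx
      rcases List.mem_cons.mp hx with h | h
      · subst h
        refine ⟨by simp only [List.length_cons]; omega, hAT1, Or.inr ?_⟩
        apply bound_mono m hz hME
        rw [mdeg_prodOf m hdiag hAT1, dsum_cons, dsum_cons]
        have idA : dg a₂ a + (dg b' b + dsum ML₂) =
            (Finsupp.single ((0 : Fin 2), a₂) 1 + Finsupp.single ((1 : Fin 2), b) 1 +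
              dsum ML₂) + dg b' a := by
          simp only [dg_def]; abel
        have idB : dsum ML =
            (Finsupp.single ((0 : Fin 2), a₂) 1 + Finsupp.single ((1 : Fin 2), b) 1 +
              dsum ML₂) + dg a b' := by
          rw [hdsumM]; simp only [dg_def]; abel
        rw [idA, idB]
        exact syn_add_lt_left m _ (anti_lt_diag m hdiag hA_ab'.1 hA_ab'.2.1 hA_ab'.2.2.1
          hA_ab'.2.2.2 hd_b'b.1 hd_a₂a.2)
      · exact hallL₂ x h
    · rw [msum_cons, hsumL₂, hPdec, hPN]
      simp only
      rw [prodOf_cons, prodOf_cons]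
      ring

theorem dg_apply_le_one (i j : ℕ) (v : Fin 2 × ℕ) : dg i j v ≤ 1 := by
  obtain ⟨u, t⟩ := v
  by_cases hu : u = 0
  · subst hu
    rw [dg_apply_fst]
    split <;> omega
  · have hu1 : u = 1 := by
      have hlt := u.isLt
      have hne : u.val ≠ 0 := fun h => hu (Fin.ext h)
      exact Fin.ext (by omega)
    subst hu1
    rw [dg_apply_snd]
    split <;> omega

theorem lift_single_sum (ML₁ : List (ℕ × ℕ))
    (Ls : List (MvPolynomial (Fin 2 × ℕ) K × (ℕ × ℕ))) :
    msum K n r s (Ls.map fun y => (y.1, y.2 :: ML₁)) =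
      (Ls.map fun y => y.1 * sparseMinor K n r s y.2.1 y.2.2).sum * prodOf K n r s ML₁ := by
  induction Ls with
  | nil => rw [List.map_nil, msum_nil, List.map_nil, List.sum_nil, zero_mul]
  | cons y Ls ih =>
    rw [List.map_cons, msum_cons, List.map_cons, List.sum_cons, ih, prodOf_cons, add_mul]
    congr 1
    ring

theorem lift_single_terms
    (hdiag : ∀ i j : ℕ, 1 ≤ i → i < j → j ≤ n → sparseMinor K n r s i j ≠ 0 →
      mdeg m (sparseMinor K n r s i j) =
        Finsupp.single ((0 : Fin 2), i) 1 + Finsupp.single ((1 : Fin 2), j) 1)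
    {E : (Fin 2 × ℕ) →₀ ℕ} (ML₁ : List (ℕ × ℕ)) (hA₁ : ∀ x ∈ ML₁, Adm K n r s x)
    (hd₁E : dsum ML₁ ≤ E)
    {Ls : List (MvPolynomial (Fin 2 × ℕ) K × (ℕ × ℕ))}
    (hall : ∀ x ∈ Ls, TOK K n r s m (E - dsum ML₁) x) :
    ∀ x ∈ Ls.map (fun y => (y.1, y.2 :: ML₁)), TOKL K n r s m (ML₁.length + 1) E x := by
  intro x hx
  rw [List.mem_map] at hx
  obtain ⟨y, hy, hxy⟩ := hx
  subst hxy
  obtain ⟨hyAdm, hybd⟩ := hall y hy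
  refine ⟨by rw [List.length_cons], ?_, ?_⟩
  · intro q hq
    rcases List.mem_cons.mp hq with h | h
    · subst h; exact hyAdm
    · exact hA₁ q h
  · by_cases hz : y.1 * sparseMinor K n r s y.2.1 y.2.2 = 0
    · left
      rw [prodOf_cons, show y.1 * (sparseMinor K n r s y.2.1 y.2.2 * prodOf K n r s ML₁) =
        (y.1 * sparseMinor K n r s y.2.1 y.2.2) * prodOf K n r s ML₁ by ring, hz, zero_mul]
    · rcases hybd with h | h
      · exact absurd h hz
      · right
        have hP₁ : prodOf K n r s ML₁ ≠ 0 := prodOf_ne_zero hA₁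
        rw [prodOf_cons, show y.1 * (sparseMinor K n r s y.2.1 y.2.2 * prodOf K n r s ML₁) =
          (y.1 * sparseMinor K n r s y.2.1 y.2.2) * prodOf K n r s ML₁ by ring,
          mdeg_mul m hz hP₁, mdeg_prodOf m hdiag hA₁]
        have hEeq : dsum ML₁ + (E - dsum ML₁) = E := add_tsub_cancel_of_le hd₁E
        calc m.toSyn (mdeg m (y.1 * sparseMinor K n r s y.2.1 y.2.2) + dsum ML₁)
            = m.toSyn (dsum ML₁ + mdeg m (y.1 * sparseMinor K n r s y.2.1 y.2.2)) := by
              rw [add_comm]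
          _ < m.toSyn (dsum ML₁ + (E - dsum ML₁)) :=
              syn_add_lt_left m _ h
          _ = m.toSyn E := by rw [hEeq]

theorem case3 (h1 : r + s ≤ n)
    (hdiag : ∀ i j : ℕ, 1 ≤ i → i < j → j ≤ n → sparseMinor K n r s i j ≠ 0 →
      mdeg m (sparseMinor K n r s i j) =
        Finsupp.single ((0 : Fin 2), i) 1 + Finsupp.single ((1 : Fin 2), j) 1)
    {N₀ : ℕ} (hIH : MasterP K n r s m N₀)
    (ML NL : List (ℕ × ℕ)) (hlM : ML.length = N₀ + 1) (hlN : NL.length = N₀ + 1)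
    (hAM : ∀ x ∈ ML, Adm K n r s x) (hAN : ∀ x ∈ NL, Adm K n r s x)
    (hdne : dsum ML ≠ dsum NL)
    (E : (Fin 2 × ℕ) →₀ ℕ) (hME : dsum ML ≤ E) (hNE : dsum NL ≤ E) :
    ∃ L, (∀ x ∈ L, TOKL K n r s m (N₀ + 1) E x) ∧
      msum K n r s L = monomial (E - dsum ML) (1 : K) * prodOf K n r s ML -
        monomial (E - dsum NL) (1 : K) * prodOf K n r s NL := by
  classical
  -- existence of an exchangeable pair in NL
  have hex : ∃ q ∈ NL, ((ML.map Prod.fst).count q.1 < (NL.map Prod.fst).count q.1) ∨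
      ((ML.map Prod.snd).count q.2 < (NL.map Prod.snd).count q.2) := by
    by_contra hcon
    push_neg at hcon
    apply hdne
    have hcnt1 : ∀ c, (NL.map Prod.fst).count c ≤ (ML.map Prod.fst).count c := by
      intro c
      by_cases hc : c ∈ NL.map Prod.fst
      · obtain ⟨q, hqN, hq1⟩ := List.mem_map.mp hc
        subst hq1
        exact (hcon q hqN).1
      · rw [List.count_eq_zero_of_not_mem hc]
        omega
    have hcnt2 : ∀ c, (NL.map Prod.snd).count c ≤ (ML.map Prod.snd).count c := by
      intro c
      by_cases hc : c ∈ NL.map Prod.snd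
      · obtain ⟨q, hqN, hq1⟩ := List.mem_map.mp hc
        subst hq1
        exact (hcon q hqN).2
      · rw [List.count_eq_zero_of_not_mem hc]
        omega
    have hmul1 : ((NL.map Prod.fst : List ℕ) : Multiset ℕ) = (ML.map Prod.fst : List ℕ) := by
      apply Multiset.eq_of_le_of_card_le
      · rw [Multiset.le_iff_count]
        intro c
        rw [Multiset.coe_count, Multiset.coe_count]
        exact hcnt1 c
      · simp only [Multiset.coe_card, List.length_map]
        omega
    have hmul2 : ((NL.map Prod.snd : List ℕ) : Multiset ℕ) = (ML.map Prod.snd : List ℕ) := by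
      apply Multiset.eq_of_le_of_card_le
      · rw [Multiset.le_iff_count]
        intro c
        rw [Multiset.coe_count, Multiset.coe_count]
        exact hcnt2 c
      · simp only [Multiset.coe_card, List.length_map]
        omega
    have hq1 : ∀ c, (ML.map Prod.fst).count c = (NL.map Prod.fst).count c := by
      intro c
      have := congrArg (Multiset.count c) hmul1
      rw [Multiset.coe_count, Multiset.coe_count] at this
      omega
    have hq2 : ∀ c, (ML.map Prod.snd).count c = (NL.map Prod.snd).count c := by
      intro c
      have := congrArg (Multiset.count c) hmul2
      rw [Multiset.coe_count, Multiset.coe_count] at this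
      omega
    apply Finsupp.ext
    intro v
    obtain ⟨u, t⟩ := v
    by_cases hu : u = 0
    · subst hu
      rw [dsum_apply_fst, dsum_apply_fst]
      exact hq1 t
    · have hu1 : u = 1 := by
        have hlt := u.isLt
        have hne : u.val ≠ 0 := fun h => hu (Fin.ext h)
        exact Fin.ext (by omega)
      subst hu1
      rw [dsum_apply_snd, dsum_apply_snd]
      exact hq2 t
  obtain ⟨q, hqN, hq⟩ := hex
  -- choose the pair (to be removed) in ML
  have hMLne : ML ≠ [] := by
    intro h
    rw [h] at hlM
    simp at hlM
  have hsel : ∃ p ∈ ML, (p.1 = q.1 ∨ (ML.map Prod.fst).count q.1 < (NL.map Prod.fst).count q.1) ∧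
      (p.2 = q.2 ∨ (ML.map Prod.snd).count q.2 < (NL.map Prod.snd).count q.2) := by
    by_cases hc : (ML.map Prod.fst).count q.1 < (NL.map Prod.fst).count q.1
    · by_cases hd : (ML.map Prod.snd).count q.2 < (NL.map Prod.snd).count q.2
      · obtain ⟨p, hp⟩ := List.exists_mem_of_ne_nil ML hMLne
        exact ⟨p, hp, Or.inr hc, Or.inr hd⟩
      · -- q.2 occurs in ML
        have hd2 : q.2 ∈ ML.map Prod.snd := by
          have hpos : 0 < (NL.map Prod.snd).count q.2 :=
            List.count_pos_iff.mpr (List.mem_map_of_mem (f := Prod.snd) hqN)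
          exact List.count_pos_iff.mp (by omega)
        obtain ⟨p, hpM, hp2⟩ := List.mem_map.mp hd2
        exact ⟨p, hpM, Or.inr hc, Or.inl hp2⟩
    · have hd : (ML.map Prod.snd).count q.2 < (NL.map Prod.snd).count q.2 := by
        rcases hq with h | h
        · exact absurd h hc
        · exact h
      have hc1 : q.1 ∈ ML.map Prod.fst := by
        have hpos : 0 < (NL.map Prod.fst).count q.1 :=
          List.count_pos_iff.mpr (List.mem_map_of_mem (f := Prod.fst) hqN)
        exact List.count_pos_iff.mp (by omega)
      obtain ⟨p, hpM, hp1⟩ := List.mem_map.mp hc1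
      exact ⟨p, hpM, Or.inl hp1, Or.inr hd⟩
  obtain ⟨p, hpM, hca, hdb⟩ := hsel
  obtain ⟨ML₁, hpermM⟩ := exists_perm_cons hpM
  obtain ⟨NL₂, hpermN⟩ := exists_perm_cons hqN
  have hlM₁ : ML₁.length = N₀ := by
    have := hpermM.length_eq
    simp only [List.length_cons] at this
    omega
  have hlN₂ : NL₂.length = N₀ := by
    have := hpermN.length_eq
    simp only [List.length_cons] at this
    omega
  have hA₁ : ∀ x ∈ ML₁, Adm K n r s x := fun x hx =>
    hAM x (hpermM.mem_iff.mpr (List.mem_cons_of_mem _ hx))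
  have hA₂ : ∀ x ∈ NL₂, Adm K n r s x := fun x hx =>
    hAN x (hpermN.mem_iff.mpr (List.mem_cons_of_mem _ hx))
  have hAp : Adm K n r s p := hAM p hpM
  have hAq : Adm K n r s q := hAN q hqN
  have hdsumM : dsum ML = dg p.1 p.2 + dsum ML₁ := by
    rw [dsum_perm hpermM, dsum_cons]
  have hdsumN : dsum NL = dg q.1 q.2 + dsum NL₂ := by
    rw [dsum_perm hpermN, dsum_cons]
  -- the exchanged product still has exponent below E
  have hP'E : dg q.1 q.2 + dsum ML₁ ≤ E := by
    rw [Finsupp.le_def]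
    intro v
    have hT := congrArg (fun f : (Fin 2 × ℕ) →₀ ℕ => f v) hdsumM
    simp only [Finsupp.add_apply] at hT
    have hTE := Finsupp.le_def.mp hME v
    have hUE := Finsupp.le_def.mp hNE v
    have hA1 := dg_apply_le_one q.1 q.2 v
    rw [Finsupp.add_apply]
    -- key alternative at each coordinate
    have hkey : dg q.1 q.2 v ≤ dg p.1 p.2 v ∨ dsum ML v < dsum NL v := by
      obtain ⟨u, t⟩ := v
      by_cases hu : u = 0
      · subst hu
        rw [dg_apply_fst, dg_apply_fst]
        by_cases hqt : q.1 = t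
        · rcases hca with h | h
          · left
            rw [if_pos hqt, if_pos (by omega : p.1 = t)]
          · right
            rw [dsum_apply_fst, dsum_apply_fst, ← hqt]
            exact h
        · left
          rw [if_neg hqt]
          omega
      · have hu1 : u = 1 := by
          have hlt := u.isLt
          have hne : u.val ≠ 0 := fun h => hu (Fin.ext h)
          exact Fin.ext (by omega)
        subst hu1
        rw [dg_apply_snd, dg_apply_snd]
        by_cases hqt : q.2 = t
        · rcases hdb with h | h
          · left
            rw [if_pos hqt, if_pos (by omega : p.2 = t)]
          · right
            rw [dsum_apply_snd, dsum_apply_snd, ← hqt]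
            exact h
        · left
          rw [if_neg hqt]
          omega
    rcases hkey with h | h
    · omega
    · omega
  -- bracket 2 : peel the common factor (q) between the exchanged product and NL
  obtain ⟨L₂, hallL₂, hsumL₂⟩ := peel_step m hdiag hIH q hAq ML₁ NL₂ hlM₁ hlN₂ hA₁ hA₂ E
    hP'E (by rw [← hdsumN]; exact hNE)
  -- bracket 1 : S-pair of the two minors, lifted by the product over ML₁
  have hd₁E : dsum ML₁ ≤ E := le_trans (by rw [hdsumM]; exact le_add_self) hME
  have hpF : dg p.1 p.2 ≤ E - dsum ML₁ := le_tsub_of_add_le_right (by rw [← hdsumM]; exact hME)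
  have hqF : dg q.1 q.2 ≤ E - dsum ML₁ := le_tsub_of_add_le_right hP'E
  obtain ⟨Ls, hallLs, hsumLs⟩ := single_spair m h1 hdiag p q hAp hAq hpF hqF
  refine ⟨(Ls.map fun y => (y.1, y.2 :: ML₁)) ++ L₂, ?_, ?_⟩
  · intro x hx
    rcases List.mem_append.mp hx with h | h
    · have := lift_single_terms m hdiag ML₁ hA₁ hd₁E hallLs x h
      rwa [hlM₁] at this
    · exact hallL₂ x h
  · rw [msum_append, lift_single_sum, hsumLs]
    rw [hsumL₂]
    have he1 : E - dsum ML₁ - dg p.1 p.2 = E - dsum ML := by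
      rw [hdsumM, add_comm, tsub_add_eq_tsub_tsub]
    have he2 : E - dsum ML₁ - dg q.1 q.2 = E - (dg q.1 q.2 + dsum ML₁) := by
      rw [add_comm, tsub_add_eq_tsub_tsub]
    have he3 : dsum NL = dg q.1 q.2 + dsum NL₂ := hdsumN
    have hPM : prodOf K n r s ML = sparseMinor K n r s p.1 p.2 * prodOf K n r s ML₁ := by
      rw [prodOf_perm hpermM, prodOf_cons]
    have hPN : prodOf K n r s NL = sparseMinor K n r s q.1 q.2 * prodOf K n r s NL₂ := by
      rw [prodOf_perm hpermN, prodOf_cons]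
    rw [he1, he2, ← he3, hPM, hPN]
    ring

theorem master (h1 : r + s ≤ n)
    (hdiag : ∀ i j : ℕ, 1 ≤ i → i < j → j ≤ n → sparseMinor K n r s i j ≠ 0 →
      mdeg m (sparseMinor K n r s i j) =
        Finsupp.single ((0 : Fin 2), i) 1 + Finsupp.single ((1 : Fin 2), j) 1)
    (N : ℕ) : MasterP K n r s m N := by
  induction N using Nat.strong_induction_on with
  | _ N IH =>
  rcases N with _ | N₀
  · intro ML NL hlM hlN _ _ E hME hNE
    have hM : ML = [] := List.length_eq_zero_iff.mp hlM
    have hN : NL = [] := List.length_eq_zero_iff.mp hlN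
    subst hM
    subst hN
    refine ⟨[], ?_, ?_⟩
    · intro x hx
      exact absurd hx (List.not_mem_nil)
    · rw [msum_nil, sub_self]
  · intro ML NL hlM hlN hAM hAN E hME hNE
    by_cases hcom : ∃ p ∈ ML, p ∈ NL
    · -- peel off a common factor
      obtain ⟨p, hpM, hpN⟩ := hcom
      obtain ⟨ML', hpermM⟩ : ∃ t, ML.Perm (p :: t) :=
        ⟨ML.erase p, List.perm_cons_erase hpM⟩
      obtain ⟨NL', hpermN⟩ : ∃ t, NL.Perm (p :: t) :=
        ⟨NL.erase p, List.perm_cons_erase hpN⟩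
      have hlM' : ML'.length = N₀ := by
        have := hpermM.length_eq
        simp only [List.length_cons] at this
        omega
      have hlN' : NL'.length = N₀ := by
        have := hpermN.length_eq
        simp only [List.length_cons] at this
        omega
      have hdM : dsum ML = dg p.1 p.2 + dsum ML' := by
        rw [dsum_perm hpermM, dsum_cons]
      have hdN : dsum NL = dg p.1 p.2 + dsum NL' := by
        rw [dsum_perm hpermN, dsum_cons]
      have hPM : prodOf K n r s ML = sparseMinor K n r s p.1 p.2 * prodOf K n r s ML' := by
        rw [prodOf_perm hpermM, prodOf_cons]
      have hPN : prodOf K n r s NL = sparseMinor K n r s p.1 p.2 * prodOf K n r s NL' := by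
        rw [prodOf_perm hpermN, prodOf_cons]
      obtain ⟨L, hall, hsum⟩ := peel_step m hdiag (IH N₀ (by omega)) p (hAM p hpM)
        ML' NL' hlM' hlN'
        (fun x hx => hAM x (hpermM.mem_iff.mpr (List.mem_cons_of_mem p hx)))
        (fun x hx => hAN x (hpermN.mem_iff.mpr (List.mem_cons_of_mem p hx))) E
        (hdM ▸ hME) (hdN ▸ hNE)
      refine ⟨L, hall, ?_⟩
      rw [hsum, hdM, hdN, hPM, hPN]
    · have hnocom : ∀ x ∈ ML, x ∉ NL := by
        intro x hx hxN
        exact hcom ⟨x, hx, hxN⟩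
      by_cases hdeq : dsum ML = dsum NL
      · -- equal degree vectors: Pluecker exchange
        have hc1 : ∀ c, (ML.map Prod.fst).count c = (NL.map Prod.fst).count c := by
          intro c
          have h := congrArg (fun f : (Fin 2 × ℕ) →₀ ℕ => f ((0 : Fin 2), c)) hdeq
          rwa [dsum_apply_fst, dsum_apply_fst] at h
        have hMLne : ML ≠ [] := by
          intro h
          rw [h] at hlM
          simp at hlM
        have hmapne : ML.map Prod.fst ≠ [] := by
          intro h
          exact hMLne (List.map_eq_nil_iff.mp h)
        obtain ⟨a, haMem, hmax⟩ := list_max (ML.map Prod.fst) hmapne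
        obtain ⟨p, hpM, hp1⟩ := List.mem_map.mp haMem
        obtain ⟨a', b⟩ := p
        simp only at hp1
        subst hp1
        have haN : a' ∈ NL.map Prod.fst := by
          have hpos : 0 < (ML.map Prod.fst).count a' := List.count_pos_iff.mpr haMem
          have := hc1 a'
          exact List.count_pos_iff.mp (by omega)
        obtain ⟨qq, hqN, hq1⟩ := List.mem_map.mp haN
        obtain ⟨a'', b'⟩ := qq
        simp only at hq1
        subst hq1
        have hbb' : b' ≠ b := by
          intro h
          subst h
          exact hnocom (a'', b') hpM hqN
        rcases Nat.lt_or_ge b' b with hblt | hbge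
        · exact caseC m h1 hdiag (IH N₀ (by omega)) ML NL hlM hlN hAM hAN hnocom hdeq
            a'' b b' hpM hqN hmax hblt E hME
        · have hblt' : b < b' := by omega
          have hnocom' : ∀ x ∈ NL, x ∉ ML := fun x hx hxM => hnocom x hxM hx
          have hmaxN : ∀ x ∈ NL.map Prod.fst, x ≤ a'' := by
            intro x hx
            have hpos : 0 < (NL.map Prod.fst).count x := List.count_pos_iff.mpr hx
            have := hc1 x
            exact hmax x (List.count_pos_iff.mp (by omega))
          obtain ⟨L', hall', hsum'⟩ := caseC m h1 hdiag (IH N₀ (by omega)) NL ML hlN hlM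
            hAN hAM hnocom' hdeq.symm a'' b' b hqN hpM hmaxN hblt' E hNE
          obtain ⟨hallF, hsumF⟩ := rep_flipL m hall'
          refine ⟨L'.map fun x => (-x.1, x.2), hallF, ?_⟩
          rw [hsumF, hsum', neg_sub]
      · exact case3 m h1 hdiag (IH N₀ (by omega)) ML NL hlM hlN hAM hAN hdeq E hME hNE

end P6

section P7

variable {K : Type*} [Field K] {n r s : ℕ} (m : MonomialOrder (Fin 2 × ℕ))

theorem list_max' {α : Type*} [LinearOrder α] (l : List α) (hl : l ≠ []) :
    ∃ a ∈ l, ∀ b ∈ l, b ≤ a := by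
  induction l with
  | nil => exact absurd rfl hl
  | cons x l ih =>
    rcases eq_or_ne l [] with h | h
    · subst h
      refine ⟨x, List.mem_cons_self, ?_⟩
      intro b hb
      rcases List.mem_cons.mp hb with h | h
      · exact le_of_eq h
      · exact absurd h (List.not_mem_nil)
    · obtain ⟨a, ha, hmax⟩ := ih h
      rcases le_total x a with hxa | hax
      · refine ⟨a, List.mem_cons_of_mem x ha, ?_⟩
        intro b hb
        rcases List.mem_cons.mp hb with h | h
        · exact le_trans (le_of_eq h) hxa
        · exact hmax b h
      · refine ⟨x, List.mem_cons_self, ?_⟩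
        intro b hb
        rcases List.mem_cons.mp hb with h | h
        · exact le_of_eq h
        · exact le_trans (hmax b h) hax

theorem msum_perm {L L' : List (MvPolynomial (Fin 2 × ℕ) K × List (ℕ × ℕ))}
    (h : L.Perm L') : msum K n r s L = msum K n r s L' := by
  unfold msum
  have := (h.map fun x => x.1 * prodOf K n r s x.2)
  exact this.sum_eq

theorem coeff_msum (L : List (MvPolynomial (Fin 2 × ℕ) K × List (ℕ × ℕ)))
    (d : (Fin 2 × ℕ) →₀ ℕ) :
    (msum K n r s L).coeff d = (L.map fun x => (x.1 * prodOf K n r s x.2).coeff d).sum := by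
  induction L with
  | nil => rw [msum_nil, List.map_nil, List.sum_nil, MvPolynomial.coeff_zero]
  | cons x L ih => rw [msum_cons, List.map_cons, List.sum_cons, MvPolynomial.coeff_add, ih]

theorem msum_scale (a : K) (L : List (MvPolynomial (Fin 2 × ℕ) K × List (ℕ × ℕ))) :
    msum K n r s (L.map fun z => (C a * z.1, z.2)) = C a * msum K n r s L := by
  induction L with
  | nil => rw [List.map_nil, msum_nil, mul_zero]
  | cons z L ih =>
    rw [List.map_cons, msum_cons, msum_cons, ih, mul_add]
    congr 1
    ring

theorem mem_support_msum {L : List (MvPolynomial (Fin 2 × ℕ) K × List (ℕ × ℕ))}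
    {d : (Fin 2 × ℕ) →₀ ℕ} (hd : d ∈ (msum K n r s L).support) :
    ∃ x ∈ L, d ∈ (x.1 * prodOf K n r s x.2).support := by
  induction L with
  | nil =>
    rw [msum_nil] at hd
    simp at hd
  | cons x L ih =>
    rw [msum_cons] at hd
    have := MvPolynomial.support_add hd
    rcases Finset.mem_union.mp this with h | h
    · exact ⟨x, List.mem_cons_self, h⟩
    · obtain ⟨y, hy, hdy⟩ := ih h
      exact ⟨y, List.mem_cons_of_mem x hy, hdy⟩

theorem mdeg_Cmul_le (a : K) (h : MvPolynomial (Fin 2 × ℕ) K) (hne : C a * h ≠ 0) :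
    m.toSyn (mdeg m (C a * h)) ≤ m.toSyn (mdeg m h) := by
  apply toSyn_mdeg_le
  intro d hd
  apply le_mdeg
  have hsub : (C a * h).support ⊆ h.support := by
    rw [← MvPolynomial.smul_eq_C_mul]
    exact MvPolynomial.support_smul
  exact hsub hd

theorem scaled_terms {N : ℕ} {E : (Fin 2 × ℕ) →₀ ℕ} (a : K)
    {R : List (MvPolynomial (Fin 2 × ℕ) K × List (ℕ × ℕ))}
    (hall : ∀ z ∈ R, TOKL K n r s m N E z) :
    ∀ z ∈ R.map (fun z => (C a * z.1, z.2)), TOKL K n r s m N E z := by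
  intro z hz
  rw [List.mem_map] at hz
  obtain ⟨y, hy, hzy⟩ := hz
  subst hzy
  obtain ⟨hlen, hAdm, hbd⟩ := hall y hy
  refine ⟨hlen, hAdm, ?_⟩
  by_cases hzero : C a * y.1 * prodOf K n r s y.2 = 0
  · exact Or.inl hzero
  · right
    have hyne : y.1 * prodOf K n r s y.2 ≠ 0 := by
      intro h
      exact hzero (by rw [mul_assoc, h, mul_zero])
    rcases hbd with h | h
    · exact absurd h hyne
    · calc m.toSyn (mdeg m (C a * y.1 * prodOf K n r s y.2))
          ≤ m.toSyn (mdeg m (y.1 * prodOf K n r s y.2)) := by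
            rw [mul_assoc] at hzero ⊢
            exact mdeg_Cmul_le m a _ hzero
        _ < m.toSyn E := h

end P7

section P8

variable {K : Type*} [Field K] {n r s : ℕ} (m : MonomialOrder (Fin 2 × ℕ))

theorem msum_filter (p : (MvPolynomial (Fin 2 × ℕ) K × List (ℕ × ℕ)) → Bool)
    (hp : ∀ x, p x = false → x.1 * prodOf K n r s x.2 = 0)
    (L : List (MvPolynomial (Fin 2 × ℕ) K × List (ℕ × ℕ))) :
    msum K n r s (L.filter p) = msum K n r s L := by
  induction L with
  | nil => rfl
  | cons x L ih =>
    rw [List.filter_cons]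
    by_cases h : p x = true
    · rw [if_pos h, msum_cons, msum_cons, ih]
    · rw [if_neg h, msum_cons, ih]
      rw [hp x (by revert h; cases p x <;> simp), zero_add]

theorem rewrite_tops (h1 : r + s ≤ n)
    (hdiag : ∀ i j : ℕ, 1 ≤ i → i < j → j ≤ n → sparseMinor K n r s i j ≠ 0 →
      mdeg m (sparseMinor K n r s i j) =
        Finsupp.single ((0 : Fin 2), i) 1 + Finsupp.single ((1 : Fin 2), j) 1)
    {N : ℕ} (hM : MasterP K n r s m N) {E : (Fin 2 × ℕ) →₀ ℕ} (ls₀ : List (ℕ × ℕ))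
    (hlen₀ : ls₀.length = N) (hA₀ : ∀ p ∈ ls₀, Adm K n r s p) (hd₀ : dsum ls₀ ≤ E) :
    ∀ S : List (MvPolynomial (Fin 2 × ℕ) K × List (ℕ × ℕ)),
    (∀ x ∈ S, x.2.length = N ∧ (∀ p ∈ x.2, Adm K n r s p) ∧ x.1 ≠ 0 ∧
      mdeg m (x.1 * prodOf K n r s x.2) = E) →
    ∃ newL, (∀ z ∈ newL, TOKL K n r s m N E z) ∧
      msum K n r s newL = msum K n r s S -
        C ((S.map fun x => x.1.coeff (mdeg m x.1)).sum) *
          (monomial (E - dsum ls₀) (1 : K) * prodOf K n r s ls₀) := by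
  intro S
  induction S with
  | nil =>
    intro _
    refine ⟨[], ?_, ?_⟩
    · intro z hz
      exact absurd hz (List.not_mem_nil)
    · rw [msum_nil, List.map_nil, List.sum_nil, map_zero, zero_mul, sub_zero]
  | cons x S' ih =>
    intro hall
    obtain ⟨hlenx, hAx, hx1, hmdegx⟩ := hall x (List.mem_cons_self)
    obtain ⟨newL', hall', hsum'⟩ := ih fun y hy => hall y (List.mem_cons_of_mem x hy)
    have hP : prodOf K n r s x.2 ≠ 0 := prodOf_ne_zero hAx
    have hsplit : mdeg m x.1 + dsum x.2 = E := by
      rw [← hmdegx, mdeg_mul m hx1 hP, mdeg_prodOf m hdiag hAx]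
    have hxd : dsum x.2 ≤ E := by
      rw [← hsplit]
      exact le_add_self
    have hu : mdeg m x.1 = E - dsum x.2 := eq_tsub_of_add_eq hsplit
    obtain ⟨R, hallR, hsumR⟩ := hM x.2 ls₀ hlenx hlen₀ hAx hA₀ E hxd hd₀
    refine ⟨(x.1 - monomial (mdeg m x.1) (x.1.coeff (mdeg m x.1)), x.2) ::
      ((R.map fun z => (C (x.1.coeff (mdeg m x.1)) * z.1, z.2)) ++ newL'), ?_, ?_⟩
    · intro z hz
      rcases List.mem_cons.mp hz with h | h
      · subst h
        refine ⟨hlenx, hAx, ?_⟩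
        by_cases hz0 : (x.1 - monomial (mdeg m x.1) (x.1.coeff (mdeg m x.1))) *
            prodOf K n r s x.2 = 0
        · exact Or.inl hz0
        · right
          have hx1' : x.1 - monomial (mdeg m x.1) (x.1.coeff (mdeg m x.1)) ≠ 0 := by
            intro h
            exact hz0 (by rw [h, zero_mul])
          rw [mdeg_mul m hx1' hP, mdeg_prodOf m hdiag hAx]
          have hlt := support_sub_lead m hx1 (mdeg_mem_support m hx1')
          calc m.toSyn (mdeg m (x.1 - monomial (mdeg m x.1) (x.1.coeff (mdeg m x.1))) +
                dsum x.2)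
              = m.toSyn (dsum x.2 + mdeg m (x.1 - monomial (mdeg m x.1)
                  (x.1.coeff (mdeg m x.1)))) := by rw [add_comm]
            _ < m.toSyn (dsum x.2 + mdeg m x.1) := syn_add_lt_left m _ hlt
            _ = m.toSyn E := by rw [add_comm, hsplit]
      · rcases List.mem_append.mp h with h | h
        · exact scaled_terms m _ hallR z h
        · exact hall' z h
    · have eL : msum K n r s ((x.1 - monomial (mdeg m x.1) (x.1.coeff (mdeg m x.1)), x.2) ::
          ((R.map fun z => (C (x.1.coeff (mdeg m x.1)) * z.1, z.2)) ++ newL')) =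
          (x.1 - monomial (mdeg m x.1) (x.1.coeff (mdeg m x.1))) * prodOf K n r s x.2 +
          (C (x.1.coeff (mdeg m x.1)) * msum K n r s R + msum K n r s newL') := by
        rw [msum_cons, msum_append, msum_scale]
      have eR : msum K n r s (x :: S') = x.1 * prodOf K n r s x.2 + msum K n r s S' :=
        msum_cons x S'
      have hCM : (monomial (mdeg m x.1)) (x.1.coeff (mdeg m x.1)) =
          C (x.1.coeff (mdeg m x.1)) * monomial (mdeg m x.1) (1 : K) := by
        rw [C_mul_monomial, mul_one]
      rw [eL, eR, hsumR, hsum', List.map_cons, List.sum_cons, map_add, ← hu, hCM]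
      ring

theorem main (h1 : r + s ≤ n)
    (hdiag : ∀ i j : ℕ, 1 ≤ i → i < j → j ≤ n → sparseMinor K n r s i j ≠ 0 →
      mdeg m (sparseMinor K n r s i j) =
        Finsupp.single ((0 : Fin 2), i) 1 + Finsupp.single ((1 : Fin 2), j) 1)
    (N : ℕ) (D : m.syn) :
    ∀ f : MvPolynomial (Fin 2 × ℕ) K, f ≠ 0 →
    (∃ L, (∀ x ∈ L, TOKL K n r s m N (m.toSyn.symm D) x) ∧ f = msum K n r s L) →
    ∃ ls, (∀ p ∈ ls, Adm K n r s p) ∧ ls.length = N ∧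
      mdeg m (prodOf K n r s ls) ≤ mdeg m f := by
  induction D using WellFoundedLT.induction with
  | _ D IH =>
  rintro f hf ⟨L, hallL, hfL⟩
  classical
  have hmemL' : ∀ x, x ∈ (L.filter fun x => decide (x.1 * prodOf K n r s x.2 ≠ 0)) →
      x ∈ L ∧ x.1 * prodOf K n r s x.2 ≠ 0 := by
    intro x hx
    rw [List.mem_filter] at hx
    exact ⟨hx.1, of_decide_eq_true hx.2⟩
  set L' := L.filter fun x => decide (x.1 * prodOf K n r s x.2 ≠ 0) with hL'def
  have hfL' : f = msum K n r s L' := by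
    rw [hfL, hL'def, msum_filter _ (fun x hx => by
      by_contra hne
      rw [decide_eq_false_iff_not] at hx
      exact hx hne)]
  have hL'ne : L' ≠ [] := by
    intro h
    rw [h, msum_nil] at hfL'
    exact hf hfL'
  have hmapne : (L'.map fun x => m.toSyn (mdeg m (x.1 * prodOf K n r s x.2))) ≠ [] := by
    intro h
    exact hL'ne (List.map_eq_nil_iff.mp h)
  obtain ⟨V, hVmem, hVmax⟩ := list_max' _ hmapne
  obtain ⟨x₀, hx₀, hx₀V⟩ := List.mem_map.mp hVmem
  set E := mdeg m (x₀.1 * prodOf K n r s x₀.2) with hEdef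
  have hboundE : ∀ x ∈ L', m.toSyn (mdeg m (x.1 * prodOf K n r s x.2)) ≤ m.toSyn E := by
    intro x hx
    rw [hEdef, hx₀V]
    exact hVmax _ (List.mem_map_of_mem hx)
  have hED : m.toSyn E < D := by
    have h := (hallL x₀ (hmemL' x₀ hx₀).1).2.2
    rcases h with h | h
    · exact absurd h (hmemL' x₀ hx₀).2
    · rwa [AddEquiv.apply_symm_apply] at h
  have hsupf : ∀ d ∈ f.support, m.toSyn d ≤ m.toSyn E := by
    intro d hd
    rw [hfL'] at hd
    obtain ⟨x, hxL', hdx⟩ := mem_support_msum hd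
    exact le_trans (le_mdeg m hdx) (hboundE x hxL')
  by_cases hcoeff : f.coeff E = 0
  · -- cancellation at the top: rewrite and recurse
    set S := L'.filter fun x => decide (mdeg m (x.1 * prodOf K n r s x.2) = E) with hSdef
    set rest := L'.filter fun x => !decide (mdeg m (x.1 * prodOf K n r s x.2) = E) with hRdef
    have hperm : (S ++ rest).Perm L' := by
      rw [hSdef, hRdef]
      exact List.filter_append_perm _ L'
    have hmemS : ∀ x ∈ S, x ∈ L' ∧ mdeg m (x.1 * prodOf K n r s x.2) = E := by
      intro x hx
      rw [hSdef, List.mem_filter] at hx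
      exact ⟨hx.1, of_decide_eq_true hx.2⟩
    have hmemR : ∀ x ∈ rest, x ∈ L' ∧ mdeg m (x.1 * prodOf K n r s x.2) ≠ E := by
      intro x hx
      rw [hRdef, List.mem_filter] at hx
      refine ⟨hx.1, ?_⟩
      have := hx.2
      rw [Bool.not_eq_true', decide_eq_false_iff_not] at this
      exact this
    -- terms of rest are strictly below E
    have hrest_tok : ∀ x ∈ rest, TOKL K n r s m N E x := by
      intro x hx
      obtain ⟨hxL', hxne⟩ := hmemR x hx
      obtain ⟨hlen, hAdm, -⟩ := hallL x (hmemL' x hxL').1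
      refine ⟨hlen, hAdm, Or.inr ?_⟩
      exact lt_of_le_of_ne (hboundE x hxL') (fun h => hxne (m.toSyn.injective h))
    -- coefficient bookkeeping
    have hcoeff_rest : (msum K n r s rest).coeff E = 0 := by
      rw [coeff_msum]
      apply List.sum_eq_zero
      intro c hc
      rw [List.mem_map] at hc
      obtain ⟨x, hx, hcx⟩ := hc
      subst hcx
      obtain ⟨hxL', hxne⟩ := hmemR x hx
      apply coeff_eq_zero_of_mdeg_lt
      exact lt_of_le_of_ne (hboundE x hxL') (fun h => hxne (m.toSyn.injective h))
    have hGoodS : ∀ x ∈ S, x.2.length = N ∧ (∀ p ∈ x.2, Adm K n r s p) ∧ x.1 ≠ 0 ∧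
        mdeg m (x.1 * prodOf K n r s x.2) = E := by
      intro x hx
      obtain ⟨hxL', hxE⟩ := hmemS x hx
      obtain ⟨hlen, hAdm, -⟩ := hallL x (hmemL' x hxL').1
      refine ⟨hlen, hAdm, ?_, hxE⟩
      intro h
      exact (hmemL' x hxL').2 (by rw [h, zero_mul])
    have hcoeff_S : (msum K n r s S).coeff E =
        (S.map fun x => x.1.coeff (mdeg m x.1)).sum := by
      rw [coeff_msum]
      congr 1
      apply List.map_congr_left
      intro x hx
      obtain ⟨hlen, hAdm, hx1, hxE⟩ := hGoodS x hx
      have hP : prodOf K n r s x.2 ≠ 0 := prodOf_ne_zero hAdm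
      have hE' : E = mdeg m x.1 + mdeg m (prodOf K n r s x.2) := by
        rw [← hxE, mdeg_mul m hx1 hP]
      rw [hE', coeff_mul_mdeg, mdeg_prodOf m hdiag hAdm, lc_prodOf m h1 hdiag hAdm, mul_one]
    have hS0 : (S.map fun x => x.1.coeff (mdeg m x.1)).sum = 0 := by
      have hsplit : f.coeff E = (msum K n r s S).coeff E + (msum K n r s rest).coeff E := by
        rw [hfL', ← msum_perm hperm, msum_append, MvPolynomial.coeff_add]
      rw [hcoeff, hcoeff_S, hcoeff_rest, add_zero] at hsplit
      exact hsplit.symm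
    -- pivot data
    have hx₀S : x₀ ∈ S := by
      rw [hSdef, List.mem_filter]
      exact ⟨hx₀, by simp [hEdef]⟩
    obtain ⟨hlen₀, hA₀, hx₀1, hx₀E⟩ := hGoodS x₀ hx₀S
    have hd₀ : dsum x₀.2 ≤ E := by
      have hP : prodOf K n r s x₀.2 ≠ 0 := prodOf_ne_zero hA₀
      have : mdeg m x₀.1 + dsum x₀.2 = E := by
        rw [← hx₀E, mdeg_mul m hx₀1 hP, mdeg_prodOf m hdiag hA₀]
      rw [← this]
      exact le_add_self
    obtain ⟨newLS, hallLS, hsumLS⟩ := rewrite_tops m h1 hdiag (master m h1 hdiag N) x₀.2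
      hlen₀ hA₀ hd₀ S hGoodS
    rw [hS0, map_zero, zero_mul, sub_zero] at hsumLS
    have hfnew : f = msum K n r s (newLS ++ rest) := by
      rw [msum_append, hsumLS, ← msum_append, msum_perm hperm, hfL']
    have htok : ∀ x ∈ newLS ++ rest, TOKL K n r s m N (m.toSyn.symm (m.toSyn E)) x := by
      rw [AddEquiv.symm_apply_apply]
      intro x hx
      rcases List.mem_append.mp hx with h | h
      · exact hallLS x h
      · exact hrest_tok x h
    exact IH (m.toSyn E) hED f hf ⟨newLS ++ rest, htok, hfnew⟩
  · -- no cancellation: the top product divides the leading monomial of f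
    have hmdegf : mdeg m f = E := mdeg_eq_of_coeff m hcoeff hsupf
    obtain ⟨hlen₀, hAdm₀, -⟩ := hallL x₀ (hmemL' x₀ hx₀).1
    refine ⟨x₀.2, hAdm₀, hlen₀, ?_⟩
    have hterm := (hmemL' x₀ hx₀).2
    have hx₀1 : x₀.1 ≠ 0 := fun h => hterm (by rw [h, zero_mul])
    have hP : prodOf K n r s x₀.2 ≠ 0 := prodOf_ne_zero hAdm₀
    have hE' : E = mdeg m x₀.1 + mdeg m (prodOf K n r s x₀.2) := by
      rw [hEdef, mdeg_mul m hx₀1 hP]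
    rw [hmdegf, hE']
    exact le_add_self

end P8

section P9

variable {K : Type*} [Field K] {n r s : ℕ} (m : MonomialOrder (Fin 2 × ℕ))

/-- Products of `k` minors (with pairs in range, possibly zero). -/
def ProdSet (K : Type*) [Field K] (n r s k : ℕ) : Set (MvPolynomial (Fin 2 × ℕ) K) :=
  {P | ∃ ls : List (ℕ × ℕ), ls.length = k ∧
    (∀ p ∈ ls, 1 ≤ p.1 ∧ p.1 < p.2 ∧ p.2 ≤ n) ∧ P = prodOf K n r s ls}

theorem span_pow_products (k : ℕ) :
    (Ideal.span {f | ∃ i j : ℕ, 1 ≤ i ∧ i < j ∧ j ≤ n ∧ f = sparseMinor K n r s i j}) ^ k =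
      Ideal.span (ProdSet K n r s k) := by
  induction k with
  | zero =>
    rw [pow_zero]
    symm
    rw [Ideal.one_eq_top, Ideal.eq_top_iff_one]
    apply Ideal.subset_span
    exact ⟨[], rfl, by intro p hp; exact absurd hp (List.not_mem_nil), rfl⟩
  | succ k ih =>
    rw [pow_succ, ih, Ideal.span_mul_span']
    congr 1
    ext P
    constructor
    · intro hP
      rw [Set.mem_mul] at hP
      obtain ⟨x, hx, y, hy, rfl⟩ := hP
      obtain ⟨ls, hlen, hrange, rfl⟩ := hx
      obtain ⟨i, j, hi, hij, hj, rfl⟩ := hy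
      refine ⟨(i, j) :: ls, by rw [List.length_cons, hlen], ?_, ?_⟩
      · intro p hp
        rcases List.mem_cons.mp hp with h | h
        · subst h; exact ⟨hi, hij, hj⟩
        · exact hrange p h
      · rw [prodOf_cons]
        ring
    · rintro ⟨ls, hlen, hrange, rfl⟩
      rcases ls with _ | ⟨p, ls'⟩
      · simp at hlen
      · rw [Set.mem_mul]
        have hp := hrange p (List.mem_cons_self)
        refine ⟨prodOf K n r s ls',
          ⟨ls', by simpa using hlen, fun q hq => hrange q (List.mem_cons_of_mem p hq), rfl⟩,
          sparseMinor K n r s p.1 p.2, ⟨p.1, p.2, hp.1, hp.2.1, hp.2.2, rfl⟩, ?_⟩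
        rw [prodOf_cons]
        ring

theorem factor_ne_zero {ls : List (ℕ × ℕ)} (h : prodOf K n r s ls ≠ 0) :
    ∀ p ∈ ls, sparseMinor K n r s p.1 p.2 ≠ 0 := by
  induction ls with
  | nil =>
    intro p hp
    exact absurd hp (List.not_mem_nil)
  | cons q ls ih =>
    rw [prodOf_cons] at h
    intro p hp
    rcases List.mem_cons.mp hp with h' | h'
    · subst h'
      exact left_ne_zero_of_mul h
    · exact ih (right_ne_zero_of_mul h) p h'

theorem msum_mulcf (a : MvPolynomial (Fin 2 × ℕ) K)
    (L : List (MvPolynomial (Fin 2 × ℕ) K × List (ℕ × ℕ))) :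
    msum K n r s (L.map fun z => (a * z.1, z.2)) = a * msum K n r s L := by
  induction L with
  | nil => rw [List.map_nil, msum_nil, mul_zero]
  | cons z L ih =>
    rw [List.map_cons, msum_cons, msum_cons, ih, mul_add]
    congr 1
    ring

theorem rep_of_mem_span (k : ℕ) {f : MvPolynomial (Fin 2 × ℕ) K}
    (hf : f ∈ Ideal.span (ProdSet K n r s k)) :
    ∃ L, (∀ x ∈ L, x.2.length = k ∧ ∀ p ∈ x.2, Adm K n r s p) ∧ f = msum K n r s L := by
  refine Submodule.span_induction ?_ ?_ ?_ ?_ hf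
  · rintro P ⟨ls, hlen, hrange, rfl⟩
    by_cases hz : prodOf K n r s ls = 0
    · refine ⟨[], ?_, by rw [msum_nil, hz]⟩
      intro x hx
      exact absurd hx (List.not_mem_nil)
    · refine ⟨[(1, ls)], ?_, ?_⟩
      · intro x hx
        rw [List.mem_singleton] at hx
        subst hx
        refine ⟨hlen, fun p hp => ?_⟩
        obtain ⟨h1p, h2p, h3p⟩ := hrange p hp
        exact ⟨h1p, h2p, h3p, factor_ne_zero hz p hp⟩
      · rw [msum_cons, msum_nil, add_zero, one_mul]
  · refine ⟨[], ?_, by rw [msum_nil]⟩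
    intro x hx
    exact absurd hx (List.not_mem_nil)
  · rintro x y hx hy ⟨L1, h1L, rfl⟩ ⟨L2, h2L, rfl⟩
    refine ⟨L1 ++ L2, ?_, (msum_append L1 L2).symm⟩
    intro z hz
    rcases List.mem_append.mp hz with h | h
    · exact h1L z h
    · exact h2L z h
  · rintro a x hx ⟨L, hL, rfl⟩
    refine ⟨L.map fun z => (a * z.1, z.2), ?_, ?_⟩
    · intro z hz
      rw [List.mem_map] at hz
      obtain ⟨y, hy, rfl⟩ := hz
      exact hL y hy
    · rw [msum_mulcf, smul_eq_mul]

theorem exists_strict_bound (l : List m.syn) : ∃ D : m.syn, ∀ v ∈ l, v < D := by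
  obtain ⟨W, -, hW⟩ := list_max' ((⊥ : m.syn) :: l) (by simp)
  have hpos : (0 : m.syn) < m.toSyn (Finsupp.single ((0 : Fin 2), 0) 1) := by
    have hne : m.toSyn (Finsupp.single ((0 : Fin 2), 0) 1) ≠ 0 := by
      intro h
      have := m.toSyn.injective (by rw [h, map_zero] :
        m.toSyn (Finsupp.single ((0 : Fin 2), 0) 1) = m.toSyn 0)
      have happ := congrArg (fun g : (Fin 2 × ℕ) →₀ ℕ => g ((0 : Fin 2), 0)) this
      simp [Finsupp.single_apply] at happ
    have := bot_le (a := m.toSyn (Finsupp.single ((0 : Fin 2), 0) 1))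
    rw [MonomialOrder.bot_eq_zero] at this
    exact lt_of_le_of_ne this (Ne.symm hne)
  refine ⟨W + m.toSyn (Finsupp.single ((0 : Fin 2), 0) 1), ?_⟩
  intro v hv
  have hvW : v ≤ W := hW v (List.mem_cons_of_mem _ hv)
  calc v ≤ W := hvW
    _ < W + m.toSyn (Finsupp.single ((0 : Fin 2), 0) 1) := lt_add_of_pos_right W hpos

end P9

end Aux

/-- For a sparse `2 × n` matrix `X` with `I = I₂(X)`, the `k`-fold products of the `2 × 2`
minors of `X` form a Gröbner basis of `Iᵏ` with respect to any diagonal term order, for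
every `k ≥ 1`: the leading monomials of the nonzero `k`-fold products of minors generate
`in(Iᵏ)`. -/
theorem products_of_minors_groebner (K : Type*) [Field K] (n r s : ℕ)
    (h1 : r + s ≤ n) (h2 : n ≤ 2 * r + s) (h3 : r < n) (hn : 3 ≤ n)
    (m : MonomialOrder (Fin 2 × ℕ))
    (hdiag : ∀ i j : ℕ, 1 ≤ i → i < j → j ≤ n → sparseMinor K n r s i j ≠ 0 →
      mdeg m (sparseMinor K n r s i j) =
        Finsupp.single ((0 : Fin 2), i) 1 + Finsupp.single ((1 : Fin 2), j) 1)
    (I : Ideal (MvPolynomial (Fin 2 × ℕ) K))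
    (hI : I = Ideal.span {f | ∃ i j : ℕ, 1 ≤ i ∧ i < j ∧ j ≤ n ∧ f = sparseMinor K n r s i j})
    (k : ℕ) (hk : 1 ≤ k) :
    initialIdeal m (I ^ k) = Ideal.span {g | ∃ a b : Fin k → ℕ,
      (∀ t, 1 ≤ a t ∧ a t < b t ∧ b t ≤ n) ∧
      (∏ t, sparseMinor K n r s (a t) (b t)) ≠ 0 ∧
      g = monomial (mdeg m (∏ t, sparseMinor K n r s (a t) (b t))) (1 : K)} := by
  apply le_antisymm
  · -- initial ideal of I^k is contained in the span of the leading monomials of products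
    rw [initialIdeal]
    apply Ideal.span_le.mpr
    rintro g ⟨f, hfIk, hf0, rfl⟩
    rw [hI, Aux.span_pow_products] at hfIk
    obtain ⟨L, hL, hfL⟩ := Aux.rep_of_mem_span k hfIk
    obtain ⟨D, hD⟩ := Aux.exists_strict_bound m
      (L.map fun x => m.toSyn (mdeg m (x.1 * Aux.prodOf K n r s x.2)))
    have htok : ∀ x ∈ L, Aux.TOKL K n r s m k (m.toSyn.symm D) x := by
      intro x hx
      obtain ⟨hlen, hAdm⟩ := hL x hx
      refine ⟨hlen, hAdm, Or.inr ?_⟩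
      rw [AddEquiv.apply_symm_apply]
      exact hD _ (List.mem_map_of_mem hx)
    obtain ⟨ls, hAdm, hlen, hle⟩ := Aux.main m h1 hdiag k D f hf0 ⟨L, htok, hfL⟩
    subst hlen
    have hprodne : Aux.prodOf K n r s ls ≠ 0 := Aux.prodOf_ne_zero hAdm
    have hprod : (∏ t : Fin ls.length, sparseMinor K n r s ((ls.get t).1) ((ls.get t).2)) =
        Aux.prodOf K n r s ls := by
      rw [Aux.prodOf, ← Fin.prod_univ_fun_getElem ls (fun p => sparseMinor K n r s p.1 p.2)]
      apply Finset.prod_congr rfl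
      intro t _
      simp [List.get_eq_getElem]
    have hfinal : monomial (mdeg m f) (1 : K) =
        monomial (mdeg m f - mdeg m (Aux.prodOf K n r s ls)) (1 : K) *
          monomial (mdeg m (Aux.prodOf K n r s ls)) (1 : K) := by
      rw [monomial_mul, one_mul, tsub_add_cancel_of_le hle]
    rw [hfinal]
    apply Ideal.mul_mem_left
    apply Ideal.subset_span
    rw [← hprod]
    refine ⟨fun t => (ls.get t).1, fun t => (ls.get t).2, ?_, ?_, rfl⟩
    · intro t
      have hAt := hAdm (ls.get t) (List.get_mem ls t)
      exact ⟨hAt.1, hAt.2.1, hAt.2.2.1⟩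
    · rw [hprod]
      exact hprodne
  · -- each leading monomial of a product of minors lies in the initial ideal
    rw [initialIdeal]
    apply Ideal.span_le.mpr
    rintro g ⟨a, b, hab, hne, rfl⟩
    apply Ideal.subset_span
    refine ⟨∏ t, sparseMinor K n r s (a t) (b t), ?_, hne, rfl⟩
    have hmemI : ∀ t, sparseMinor K n r s (a t) (b t) ∈ I := by
      intro t
      rw [hI]
      exact Ideal.subset_span ⟨a t, b t, (hab t).1, (hab t).2.1, (hab t).2.2, rfl⟩
    have hmem := Ideal.prod_mem_prod (I := fun _ : Fin k => I) (s := Finset.univ)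
      (x := fun t => sparseMinor K n r s (a t) (b t)) (fun i _ => hmemI i)
    rwa [Finset.prod_const, Finset.card_univ, Fintype.card_fin] at hmem
end

section
/- Let R be a commutative ring, I₁, I₂ ideals, x a non-zerodivisor on I₂² with I₂ ⊆ I₁ (i.e., I₂² : (x) = I₂²), and let I = xI₁ + I₂. Then there is a short exact sequence of R-modules 0 → xI₂² → (x²I₁² + xI₁I₂) ⊕ I₂² → I² → 0, where the first map sends a to (a, −a) and the second sends (b, c) to b + c. -/
/-!
For submodules `M ≤ A ⊓ B`, the sequence `0 → M → A ⊕ B → A + B`, `a ↦ (a, -a)`,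
`(b, c) ↦ b + c`, is exact as soon as `A ⊓ B ≤ M`. With `A = x²I₁² + xI₁I₂`, `B = I₂²` and
`M = xI₂²` two facts about ideals remain. First, `A = x(xI₁² + I₁I₂)`, so an element of `A ∩ I₂²`
is `xt` with `xt ∈ I₂²`; as `I₂² : (x) = I₂²`, `t ∈ I₂²`, i.e. `A ∩ I₂² ⊆ xI₂²`. Second,
expanding the square of `xI₁ + I₂` (where `2J = J + J = J`) gives `A + I₂² = (xI₁ + I₂)²`.
-/

namespace Submodule

variable {R N : Type*} [Ring R] [AddCommGroup N] [Module R N] {M A B : Submodule R N}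

theorem injective_inclusion_prod_neg_inclusion (hMA : M ≤ A) (hMB : M ≤ B) :
    Function.Injective ((inclusion hMA).prod (-(inclusion hMB))) :=
  fun _ _ hm => inclusion_injective hMA (congrArg Prod.fst hm)

theorem exact_inclusion_prod_neg_inclusion_coprod_subtype (hMA : M ≤ A) (hMB : M ≤ B)
    (hAB : A ⊓ B ≤ M) :
    Function.Exact ((inclusion hMA).prod (-(inclusion hMB))) (A.subtype.coprod B.subtype) := by
  intro y
  constructor
  · intro hy
    have hy₂ : (y.2 : N) = -y.1 := eq_neg_of_add_eq_zero_right hy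
    have hy₁B : (y.1 : N) ∈ B := by simpa [hy₂] using neg_mem y.2.2
    refine ⟨⟨y.1, hAB ⟨y.1.2, hy₁B⟩⟩, ?_⟩
    ext <;> simp [hy₂]
  · rintro ⟨m, rfl⟩
    simp

theorem range_coprod_subtype : LinearMap.range (A.subtype.coprod B.subtype) = A ⊔ B := by
  rw [LinearMap.range_coprod, range_subtype, range_subtype]

end Submodule

namespace Ideal

variable {R : Type*} [CommRing R]

theorem span_singleton_mul_inf_le_of_colon_le {x : R} {J K : Ideal R}
    (hK : K.colon (span {x}) ≤ K) : span {x} * J ⊓ K ≤ span {x} * K := by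
  rintro _ ⟨hy, hyK⟩
  obtain ⟨t, -, rfl⟩ := mem_span_singleton_mul.mp hy
  have htK : t ∈ K := hK (mem_colon_span_singleton.mpr (mul_comm x t ▸ hyK))
  exact mem_span_singleton_mul.mpr ⟨t, htK, rfl⟩

theorem add_sq_eq_sq_add_mul_add_sq (I J : Ideal R) : (I + J) ^ 2 = I ^ 2 + I * J + J ^ 2 := by
  rw [add_sq, mul_assoc, two_mul]
  simp only [Ideal.add_eq_sup, sup_idem]

end Ideal

/-- Let `R` be a commutative ring, `I₁, I₂` ideals with `I₂ ⊆ I₁`, `x ∈ R` a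
non-zerodivisor modulo `I₂²` (i.e. `I₂² : (x) = I₂²`), and `I = xI₁ + I₂`.  Then there is a
short exact sequence of `R`-modules
`0 → xI₂² → (x²I₁² + xI₁I₂) ⊕ I₂² → I² → 0`,
where the first map sends `a` to `(a, −a)` and the second sends `(b, c)` to `b + c`. -/
theorem rees_short_exact_sequence {R : Type*} [CommRing R] (x : R) (I₁ I₂ : Ideal R)
    (h : I₂ ≤ I₁) (hx : (I₂ ^ 2).colon (Ideal.span {x}) = I₂ ^ 2) :
    let A : Ideal R := Ideal.span {x ^ 2} * I₁ ^ 2 + Ideal.span {x} * I₁ * I₂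
    let B : Ideal R := I₂ ^ 2
    let M : Ideal R := Ideal.span {x} * I₂ ^ 2
    let f : M →ₗ[R] A × B :=
      LinearMap.prod
        (Submodule.inclusion (by
          refine le_trans ?_ le_sup_right
          show Ideal.span {x} * I₂ ^ 2 ≤ Ideal.span {x} * I₁ * I₂
          rw [pow_two, ← mul_assoc]
          exact Ideal.mul_mono (Ideal.mul_mono le_rfl h) le_rfl))
        (-(Submodule.inclusion Ideal.mul_le_right))
    let g : A × B →ₗ[R] R := A.subtype.coprod B.subtype
    Function.Injective f ∧ Function.Exact f g ∧
      LinearMap.range g = ((Ideal.span {x} * I₁ + I₂) ^ 2 : Ideal R) := by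
  intro A B M f g
  have hA : A = Ideal.span {x} * (Ideal.span {x} * I₁ ^ 2 + I₁ * I₂) := by
    simp only [A, ← Ideal.span_singleton_pow]
    ring
  have hAB : A ⊓ B ≤ M := hA ▸ Ideal.span_singleton_mul_inf_le_of_colon_le hx.le
  refine ⟨Submodule.injective_inclusion_prod_neg_inclusion _ _,
    Submodule.exact_inclusion_prod_neg_inclusion_coprod_subtype _ _ hAB, ?_⟩
  rw [Submodule.range_coprod_subtype, ← Ideal.add_eq_sup, Ideal.add_sq_eq_sq_add_mul_add_sq,
    mul_pow, Ideal.span_singleton_pow]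
end
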